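/- arXiv:2207.12674 — 13 statements merged into one kernel-verified Lean document; each statement's English description precedes it below -/
import Mathlib

section
/- If x_opt is a global optimal solution of the trust-region problem min (1/2)x^T A x + g^T x subject to ||x|| ≤ Δ, with Lagrange multiplier λ_opt ≥ 0 satisfying (A+λ_opt I)x_opt = -g and A+λ_opt I ⪰ 0, then for any x with ||x|| = Δ, f(x) - f(x_opt) = (1/2)(x_opt - x)^T (A+λ_opt I)(x_opt - x) ≥ 0. -/
open Matrix

theorem Matrix.IsSymm.quadratic_sub_quadratic_of_mulVec_eq_neg {ι R : Type*} [Fintype ι]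
    [CommRing R] {B : Matrix ι ι R} (hB : B.IsSymm) {g x₀ : ι → R} (h : B *ᵥ x₀ = -g)
    (x : ι → R) :
    (x ⬝ᵥ B *ᵥ x + 2 * (g ⬝ᵥ x)) - (x₀ ⬝ᵥ B *ᵥ x₀ + 2 * (g ⬝ᵥ x₀))
      = (x₀ - x) ⬝ᵥ B *ᵥ (x₀ - x) := by
  have hsymm : x₀ ⬝ᵥ B *ᵥ x = x ⬝ᵥ B *ᵥ x₀ := by
    rw [dotProduct_mulVec, ← mulVec_transpose, hB.eq, dotProduct_comm]
  have hgx : g ⬝ᵥ x = -(x ⬝ᵥ B *ᵥ x₀) := by rw [h, dotProduct_neg, dotProduct_comm, neg_neg]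
  have hgx₀ : g ⬝ᵥ x₀ = -(x₀ ⬝ᵥ B *ᵥ x₀) := by rw [h, dotProduct_neg, dotProduct_comm, neg_neg]
  rw [mulVec_sub, sub_dotProduct, dotProduct_sub, dotProduct_sub, hsymm, hgx, hgx₀]
  ring

theorem Matrix.dotProduct_add_smul_one_mulVec {ι R : Type*} [Fintype ι] [DecidableEq ι]
    [CommRing R] (A : Matrix ι ι R) (c : R) (x : ι → R) :
    x ⬝ᵥ (A + c • 1) *ᵥ x = x ⬝ᵥ A *ᵥ x + c * (x ⬝ᵥ x) := by
  rw [add_mulVec, dotProduct_add, smul_mulVec, one_mulVec, dotProduct_smul, smul_eq_mul]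

theorem Matrix.dotProduct_self_eq_of_sqrt_eq {ι : Type*} [Fintype ι] {x y : ι → ℝ}
    (h : Real.sqrt (x ⬝ᵥ x) = Real.sqrt (y ⬝ᵥ y)) : x ⬝ᵥ x = y ⬝ᵥ y :=
  (Real.sqrt_inj (by simpa using dotProduct_self_star_nonneg x)
    (by simpa using dotProduct_self_star_nonneg y)).mp h

theorem stmt0_general {n : ℕ} (A : Matrix (Fin n) (Fin n) ℝ)
    (g : Fin n → ℝ) (Δ : ℝ)
    (xopt : Fin n → ℝ) (lopt : ℝ)
    (hxn : Real.sqrt (xopt ⬝ᵥ xopt) = Δ)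
    (heq : (A + lopt • 1).mulVec xopt = -g)
    (hpsd : (A + lopt • 1).PosSemidef)
    (x : Fin n → ℝ) (hx : Real.sqrt (x ⬝ᵥ x) = Δ) :
    ((1/2) * (x ⬝ᵥ A.mulVec x) + g ⬝ᵥ x)
        - ((1/2) * (xopt ⬝ᵥ A.mulVec xopt) + g ⬝ᵥ xopt)
      = (1/2) * ((xopt - x) ⬝ᵥ (A + lopt • 1).mulVec (xopt - x)) ∧
    0 ≤ (1/2) * ((xopt - x) ⬝ᵥ (A + lopt • 1).mulVec (xopt - x)) := by
  have hsymm : (A + lopt • 1).IsSymm := isHermitian_iff_isSymm.mp hpsd.1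
  have hnorm : x ⬝ᵥ x = xopt ⬝ᵥ xopt := dotProduct_self_eq_of_sqrt_eq (hx.trans hxn.symm)
  -- on the sphere the multiplier term `lopt * ‖·‖²` is the same at `x` and `xopt`
  have hsquare := hsymm.quadratic_sub_quadratic_of_mulVec_eq_neg heq x
  rw [dotProduct_add_smul_one_mulVec, dotProduct_add_smul_one_mulVec, hnorm] at hsquare
  have hnonneg : 0 ≤ (xopt - x) ⬝ᵥ (A + lopt • 1) *ᵥ (xopt - x) := by
    simpa using hpsd.dotProduct_mulVec_nonneg (xopt - x)
  exact ⟨by linarith, by positivity⟩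

theorem stmt0 {n : ℕ} (A : Matrix (Fin n) (Fin n) ℝ) (hA : A.IsSymm)
    (g : Fin n → ℝ) (hg : g ≠ 0) (Δ : ℝ) (hΔ : 0 < Δ)
    (xopt : Fin n → ℝ) (lopt : ℝ) (hlopt : 0 ≤ lopt)
    (hxn : Real.sqrt (xopt ⬝ᵥ xopt) = Δ)
    (heq : (A + lopt • 1).mulVec xopt = -g)
    (hpsd : (A + lopt • 1).PosSemidef)
    (x : Fin n → ℝ) (hx : Real.sqrt (x ⬝ᵥ x) = Δ) :
    ((1/2) * (x ⬝ᵥ A.mulVec x) + g ⬝ᵥ x)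
        - ((1/2) * (xopt ⬝ᵥ A.mulVec xopt) + g ⬝ᵥ xopt)
      = (1/2) * ((xopt - x) ⬝ᵥ (A + lopt • 1).mulVec (xopt - x)) ∧
    0 ≤ (1/2) * ((xopt - x) ⬝ᵥ (A + lopt • 1).mulVec (xopt - x)) :=
  stmt0_general A g Δ xopt lopt hxn heq hpsd x hx
end

section
/- Let x_opt with ||x_opt|| = Δ and Q_k have orthonormal columns. Then Δ - ||Q_k Q_k^T x_opt|| ≤ ||(I - Q_k Q_k^T) x_opt||^2 / Δ. -/
/-! `Q Qᵀ` is a symmetric idempotent, so Pythagoras gives `Δ² = ‖Q Qᵀ x‖² + ‖x - Q Qᵀ x‖²`.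
With `b = ‖Q Qᵀ x‖ ≤ Δ` the claim `Δ - b ≤ (Δ² - b²) / Δ` is `b (Δ - b) ≥ 0`. -/

open Matrix

theorem Matrix.mul_mul_self_eq_of_mul_eq_one {m n R : Type*} [Fintype m] [Fintype n]
    [DecidableEq n] [Semiring R] {A : Matrix m n R} {B : Matrix n m R} (h : B * A = 1) :
    A * B * (A * B) = A * B := by
  rw [Matrix.mul_assoc, ← Matrix.mul_assoc B, h, Matrix.one_mul]

theorem Matrix.dotProduct_self_eq_add_of_symm_idem {n R : Type*} [Fintype n] [CommRing R]
    {P : Matrix n n R} (hsymm : Pᵀ = P) (hidem : P * P = P) (x : n → R) :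
    x ⬝ᵥ x = P *ᵥ x ⬝ᵥ P *ᵥ x + (x - P *ᵥ x) ⬝ᵥ (x - P *ᵥ x) := by
  have hcross : P *ᵥ x ⬝ᵥ x = P *ᵥ x ⬝ᵥ P *ᵥ x :=
    calc P *ᵥ x ⬝ᵥ x = P *ᵥ (P *ᵥ x) ⬝ᵥ x := by rw [mulVec_mulVec, hidem]
      _ = (P *ᵥ x) ᵥ* P ⬝ᵥ x := by rw [← vecMul_transpose, hsymm]
      _ = P *ᵥ x ⬝ᵥ P *ᵥ x := (dotProduct_mulVec _ _ _).symm
  rw [sub_dotProduct, dotProduct_sub, dotProduct_sub, dotProduct_comm x (P *ᵥ x), hcross]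
  ring

theorem sub_le_div_of_sq_eq_sq_add {a b c : ℝ} (ha : 0 ≤ a) (hb : 0 ≤ b) (hc : 0 ≤ c)
    (h : a ^ 2 = b ^ 2 + c) : a - b ≤ c / a := by
  rcases ha.eq_or_lt with rfl | ha
  · simpa using hb
  have hba : b ≤ a := by nlinarith
  rw [le_div_iff₀ ha]
  nlinarith [mul_nonneg (sub_nonneg.mpr hba) hb]

theorem stmt1_general {n k : ℕ} (Q : Matrix (Fin n) (Fin k) ℝ) (hQ : Qᵀ * Q = 1)
    (Δ : ℝ) (xopt : Fin n → ℝ)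
    (hx : Real.sqrt (xopt ⬝ᵥ xopt) = Δ) :
    Δ - Real.sqrt ((Q * Qᵀ).mulVec xopt ⬝ᵥ (Q * Qᵀ).mulVec xopt)
      ≤ (Real.sqrt ((xopt - (Q * Qᵀ).mulVec xopt) ⬝ᵥ (xopt - (Q * Qᵀ).mulVec xopt)))^2 / Δ := by
  have hnonneg (v : Fin n → ℝ) : 0 ≤ v ⬝ᵥ v := by simpa using dotProduct_self_star_nonneg v
  have hpyth := dotProduct_self_eq_add_of_symm_idem (by simp [transpose_mul])
    (mul_mul_self_eq_of_mul_eq_one hQ) xopt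
  subst hx
  refine sub_le_div_of_sq_eq_sq_add (Real.sqrt_nonneg _) (Real.sqrt_nonneg _) (sq_nonneg _) ?_
  rw [Real.sq_sqrt (hnonneg _), Real.sq_sqrt (hnonneg _), Real.sq_sqrt (hnonneg _), hpyth]

theorem stmt1 {n k : ℕ} (Q : Matrix (Fin n) (Fin k) ℝ) (hQ : Qᵀ * Q = 1)
    (Δ : ℝ) (hΔ : 0 < Δ) (xopt : Fin n → ℝ)
    (hx : Real.sqrt (xopt ⬝ᵥ xopt) = Δ) :
    Δ - Real.sqrt ((Q * Qᵀ).mulVec xopt ⬝ᵥ (Q * Qᵀ).mulVec xopt)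
      ≤ (Real.sqrt ((xopt - (Q * Qᵀ).mulVec xopt) ⬝ᵥ (xopt - (Q * Qᵀ).mulVec xopt)))^2 / Δ :=
  stmt1_general Q hQ Δ xopt hx
end

section
/- Let x_opt with ||x_opt|| = Δ, Q_k with orthonormal columns, Q_k Q_k^T x_opt ≠ 0, and y_k = Δ · Q_k Q_k^T x_opt / ||Q_k Q_k^T x_opt||. Then ||x_opt - y_k||^2 ≤ ε_k^2 + ε_k^4/Δ^2 where ε_k = ||(I - Q_k Q_k^T) x_opt||. -/
open Matrix

/-! With `p` the orthogonal projection of `x`, `Δ = ‖x‖`, `s = ‖p‖` and `ε = ‖x - p‖`, Pythagoras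
gives `‖x - c • p‖² = ε² + (1 - c)² s²`, which is `ε² + (Δ - s)²` for `c = Δ / s`. Since
`ε² = (Δ - s)(Δ + s) ≥ (Δ - s) Δ`, the excess `(Δ - s)²` is at most `ε⁴ / Δ²`. -/

theorem sub_sq_le_sq_sub_sq_sq_div_sq {a b : ℝ} (hb : 0 ≤ b) (hba : b ≤ a) :
    (a - b) ^ 2 ≤ (a ^ 2 - b ^ 2) ^ 2 / a ^ 2 := by
  rcases hba.eq_or_lt with rfl | hlt
  · simp
  have ha : 0 < a := hb.trans_lt hlt
  rw [le_div_iff₀ (by positivity)]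
  have hfactor : (a ^ 2 - b ^ 2) ^ 2 = (a - b) ^ 2 * (a + b) ^ 2 := by ring
  rw [hfactor]
  gcongr
  linarith

section RadialProjection

variable {E : Type*} [NormedAddCommGroup E] [InnerProductSpace ℝ E]

theorem norm_sub_smul_sq_of_inner_sub_eq_zero {x p : E} (h : inner ℝ (x - p) p = 0) (c : ℝ) :
    ‖x - c • p‖ ^ 2 = ‖x - p‖ ^ 2 + (1 - c) ^ 2 * ‖p‖ ^ 2 := by
  have hsplit : x - c • p = (x - p) + (1 - c) • p := by
    rw [sub_smul, one_smul]; abel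
  have horth : inner ℝ (x - p) ((1 - c) • p) = 0 := by rw [inner_smul_right, h, mul_zero]
  rw [hsplit, sq, norm_add_sq_eq_norm_sq_add_norm_sq_real horth, norm_smul, Real.norm_eq_abs,
    ← sq_abs (1 - c)]
  ring

theorem norm_sub_smul_norm_div_norm_sq_le {x p : E} (h : inner ℝ (x - p) p = 0) :
    ‖x - (‖x‖ / ‖p‖) • p‖ ^ 2 ≤ ‖x - p‖ ^ 2 + ‖x - p‖ ^ 4 / ‖x‖ ^ 2 := by
  have hpyth : ‖x‖ ^ 2 = ‖x - p‖ ^ 2 + ‖p‖ ^ 2 := by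
    rw [sq, sq, sq, ← norm_add_sq_eq_norm_sq_add_norm_sq_real h, sub_add_cancel]
  have hrescale : (1 - ‖x‖ / ‖p‖) ^ 2 * ‖p‖ ^ 2 ≤ (‖x‖ - ‖p‖) ^ 2 := by
    rcases (norm_nonneg p).eq_or_lt with hp | hp
    · -- `‖x‖ / 0 = 0`, so the left side vanishes
      simp [← hp]
    · rw [← mul_pow, sub_mul, one_mul, div_mul_cancel₀ _ hp.ne', ← neg_sub, neg_sq]
  have hp_le : ‖p‖ ≤ ‖x‖ := by
    refine (pow_le_pow_iff_left₀ (norm_nonneg _) (norm_nonneg _) two_ne_zero).mp ?_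
    rw [hpyth]
    exact le_add_of_nonneg_left (sq_nonneg _)
  have hradial := sub_sq_le_sq_sub_sq_sq_div_sq (norm_nonneg p) hp_le
  rw [show ‖x‖ ^ 2 - ‖p‖ ^ 2 = ‖x - p‖ ^ 2 by linarith, ← pow_mul] at hradial
  rw [norm_sub_smul_sq_of_inner_sub_eq_zero h]
  linarith

end RadialProjection

namespace Matrix

variable {ι : Type*} [Fintype ι]

theorem dotProduct_self_eq_norm_toLp_sq (v : ι → ℝ) : v ⬝ᵥ v = ‖WithLp.toLp 2 v‖ ^ 2 := by
  rw [← real_inner_self_eq_norm_sq, EuclideanSpace.inner_toLp_toLp, star_trivial]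

theorem sub_mulVec_dotProduct_mulVec_eq_zero {R : Type*} [CommRing R] {P : Matrix ι ι R}
    (hsymm : P.IsSymm) (hidem : IsIdempotentElem P) (x : ι → R) :
    (x - P *ᵥ x) ⬝ᵥ P *ᵥ x = 0 := by
  have hPx : P *ᵥ x ⬝ᵥ P *ᵥ x = x ⬝ᵥ P *ᵥ x := calc
    P *ᵥ x ⬝ᵥ P *ᵥ x = x ᵥ* Pᵀ ⬝ᵥ P *ᵥ x := by rw [vecMul_transpose]
    _ = x ⬝ᵥ P *ᵥ x := by rw [hsymm.eq, ← dotProduct_mulVec, mulVec_mulVec, hidem.eq]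
  rw [sub_dotProduct, hPx, sub_self]

variable {κ R : Type*} [Fintype κ] [CommRing R]

omit [Fintype ι] in
theorem isSymm_mul_transpose (Q : Matrix ι κ R) : (Q * Qᵀ).IsSymm := by
  rw [IsSymm, transpose_mul, transpose_transpose]

theorem isIdempotentElem_mul_transpose [DecidableEq κ] {Q : Matrix ι κ R} (hQ : Qᵀ * Q = 1) :
    IsIdempotentElem (Q * Qᵀ) := by
  rw [IsIdempotentElem, Matrix.mul_assoc, ← Matrix.mul_assoc Qᵀ, hQ, Matrix.one_mul]

end Matrix

theorem stmt2_general {n k : ℕ} (Q : Matrix (Fin n) (Fin k) ℝ) (hQ : Qᵀ * Q = 1)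
    (Δ : ℝ) (xopt : Fin n → ℝ)
    (hx : Real.sqrt (xopt ⬝ᵥ xopt) = Δ)
    (ε : ℝ)
    (hε : ε = Real.sqrt ((xopt - (Q * Qᵀ).mulVec xopt) ⬝ᵥ (xopt - (Q * Qᵀ).mulVec xopt)))
    (y : Fin n → ℝ)
    (hy : y = (Δ / Real.sqrt ((Q * Qᵀ).mulVec xopt ⬝ᵥ (Q * Qᵀ).mulVec xopt)) •
        (Q * Qᵀ).mulVec xopt) :
    (xopt - y) ⬝ᵥ (xopt - y) ≤ ε^2 + ε^4 / Δ^2 := by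
  have horth := sub_mulVec_dotProduct_mulVec_eq_zero (isSymm_mul_transpose Q)
    (isIdempotentElem_mul_transpose hQ) xopt
  have key := norm_sub_smul_norm_div_norm_sq_le (x := WithLp.toLp 2 xopt)
    (p := WithLp.toLp 2 ((Q * Qᵀ) *ᵥ xopt)) (by
      rw [← WithLp.toLp_sub, EuclideanSpace.inner_toLp_toLp, star_trivial, dotProduct_comm, horth])
  subst hx hε hy
  simp only [dotProduct_self_eq_norm_toLp_sq, Real.sqrt_sq (norm_nonneg _), WithLp.toLp_sub,
    WithLp.toLp_smul]
  exact key

theorem stmt2 {n k : ℕ} (Q : Matrix (Fin n) (Fin k) ℝ) (hQ : Qᵀ * Q = 1)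
    (Δ : ℝ) (hΔ : 0 < Δ) (xopt : Fin n → ℝ)
    (hx : Real.sqrt (xopt ⬝ᵥ xopt) = Δ)
    (hne : (Q * Qᵀ).mulVec xopt ≠ 0)
    (ε : ℝ)
    (hε : ε = Real.sqrt ((xopt - (Q * Qᵀ).mulVec xopt) ⬝ᵥ (xopt - (Q * Qᵀ).mulVec xopt)))
    (y : Fin n → ℝ)
    (hy : y = (Δ / Real.sqrt ((Q * Qᵀ).mulVec xopt ⬝ᵥ (Q * Qᵀ).mulVec xopt)) •
        (Q * Qᵀ).mulVec xopt) :
    (xopt - y) ⬝ᵥ (xopt - y) ≤ ε^2 + ε^4 / Δ^2 :=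
  stmt2_general Q hQ Δ xopt hx ε hε y hy
end

section
/- Suppose ||x_opt|| = ||x_k|| = Δ, x_k minimizes f over {x ∈ K_k : ||x|| ≤ Δ} where K_k is a subspace containing Q_k Q_k^T x_opt (Q_k an orthonormal basis of K_k), f(x) - f(x_opt) = (1/2)(x_opt - x)^T A_opt (x_opt - x) for all ||x|| = Δ with A_opt ⪰ 0. Then 0 ≤ f(x_k) - f(x_opt) ≤ (1/2)||A_opt|| (1 + ε_k^2/Δ^2) ε_k^2, where ε_k = ||(I - Q_k Q_k^T)x_opt||. -/
/-!
Let `p = Q Qᵀ x_opt` be the projection of `x_opt` onto `K_k`, with `‖p‖ = r`, so that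
`ε² = Δ² - r²`. The vector `y = (Δ / r) p` (any `y ∈ K_k` of norm `Δ` if `p = 0`) is feasible for
the restricted problem and satisfies `⟪x_opt, y⟫ = Δ r`, hence `‖x_opt - y‖² = 2Δ(Δ - r)`, which is
at most `(1 + ε²/Δ²) ε²`. Since `x_k` is optimal on `K_k` and `f` is the `A_opt`-quadratic around
`x_opt` on the sphere, `f(x_k) - f(x_opt) ≤ f(y) - f(x_opt) ≤ ½ ‖A_opt‖ ‖x_opt - y‖²`.
-/

open Matrix

noncomputable def fobj {n : ℕ} (A : Matrix (Fin n) (Fin n) ℝ) (g x : Fin n → ℝ) : ℝ :=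
  (1/2) * (x ⬝ᵥ A.mulVec x) + g ⬝ᵥ x

open RealInnerProductSpace WithLp

lemma two_mul_mul_sub_le_one_add_div_mul {r Δ : ℝ} (hr : 0 ≤ r) (hΔ : 0 < Δ) :
    2 * Δ * (Δ - r) ≤ (1 + (Δ ^ 2 - r ^ 2) / Δ ^ 2) * (Δ ^ 2 - r ^ 2) := by
  have hgap : (1 + (Δ ^ 2 - r ^ 2) / Δ ^ 2) * (Δ ^ 2 - r ^ 2) - 2 * Δ * (Δ - r)
      = r * (Δ - r) ^ 2 * (2 * Δ + r) / Δ ^ 2 := by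
    field_simp
    ring
  have : 0 ≤ r * (Δ - r) ^ 2 * (2 * Δ + r) / Δ ^ 2 := by positivity
  linarith

section InnerProductSpace

variable {E : Type*} [NormedAddCommGroup E] [InnerProductSpace ℝ E]

lemma real_inner_map_self_le_opNorm_mul_sq (T : E →L[ℝ] E) (v : E) :
    ⟪v, T v⟫ ≤ ‖T‖ * ‖v‖ ^ 2 :=
  calc ⟪v, T v⟫ ≤ ‖v‖ * ‖T v‖ := real_inner_le_norm _ _
    _ ≤ ‖v‖ * (‖T‖ * ‖v‖) := by gcongr; exact T.le_opNorm v
    _ = ‖T‖ * ‖v‖ ^ 2 := by ring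

lemma exists_mem_norm_eq_inner_eq_mul_norm {K : Submodule ℝ E} {p v : E} {Δ : ℝ}
    (hp : p ∈ K) (hv : v ∈ K) (hvΔ : ‖v‖ = Δ) :
    ∃ y ∈ K, ‖y‖ = Δ ∧ ⟪p, y⟫ = Δ * ‖p‖ := by
  by_cases hp0 : p = 0
  · exact ⟨v, hv, hvΔ, by simp [hp0]⟩
  have hpos : 0 < ‖p‖ := norm_pos_iff.mpr hp0
  have hΔ : 0 ≤ Δ := hvΔ ▸ norm_nonneg v
  refine ⟨(Δ / ‖p‖) • p, K.smul_mem _ hp, ?_, ?_⟩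
  · rw [norm_smul, Real.norm_of_nonneg (by positivity), div_mul_cancel₀ _ hpos.ne']
  · rw [real_inner_smul_right, real_inner_self_eq_norm_sq]
    field_simp

lemma exists_mem_norm_eq_norm_sub_sq_le {K : Submodule ℝ E} {x p v : E} {Δ : ℝ} (hΔ : 0 < Δ)
    (hp : p ∈ K) (hperp : ∀ u ∈ K, ⟪x - p, u⟫ = 0) (hx : ‖x‖ = Δ) (hv : v ∈ K) (hvΔ : ‖v‖ = Δ) :
    ∃ y ∈ K, ‖y‖ = Δ ∧ ‖x - y‖ ^ 2 ≤ (1 + ‖x - p‖ ^ 2 / Δ ^ 2) * ‖x - p‖ ^ 2 := by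
  obtain ⟨y, hyK, hy, hpy⟩ := exists_mem_norm_eq_inner_eq_mul_norm hp hv hvΔ
  refine ⟨y, hyK, hy, ?_⟩
  have hx_eq : x = (x - p) + p := (sub_add_cancel x p).symm
  have hpyth : ‖x - p‖ ^ 2 = Δ ^ 2 - ‖p‖ ^ 2 := by
    have := norm_add_sq_eq_norm_sq_add_norm_sq_real (hperp p hp)
    rw [← hx_eq, hx] at this
    linarith
  have hxy : ⟪x, y⟫ = Δ * ‖p‖ := by
    rw [hx_eq, inner_add_left, hperp y hyK, hpy, zero_add]
  have hdist : ‖x - y‖ ^ 2 = 2 * Δ * (Δ - ‖p‖) := by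
    rw [norm_sub_sq_real, hx, hy, hxy]
    ring
  rw [hdist, hpyth]
  exact two_mul_mul_sub_le_one_add_div_mul (norm_nonneg p) hΔ

end InnerProductSpace

lemma norm_toLp_eq_sqrt_dotProduct {ι : Type*} [Fintype ι] (x : ι → ℝ) :
    ‖toLp 2 x‖ = √(x ⬝ᵥ x) := by
  rw [norm_eq_sqrt_real_inner, EuclideanSpace.inner_toLp_toLp, star_trivial]

section Matrix

variable {m n : Type*} [Fintype n] [DecidableEq n]

lemma dotProduct_mulVec_le_opNorm_mul_sq (M : Matrix n n ℝ) (v : n → ℝ) :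
    v ⬝ᵥ M *ᵥ v ≤ ‖toEuclideanCLM (𝕜 := ℝ) M‖ * ‖toLp 2 v‖ ^ 2 := by
  simpa only [inner_toEuclideanCLM] using
    real_inner_map_self_le_opNorm_mul_sq (toEuclideanCLM (𝕜 := ℝ) M) (toLp 2 v)

lemma mem_range_toLpLin_iff {Q : Matrix m n ℝ} {y : WithLp 2 (m → ℝ)} :
    y ∈ LinearMap.range (toLpLin 2 2 Q) ↔ ∃ c, ofLp y = Q *ᵥ c := by
  constructor
  · rintro ⟨c, rfl⟩
    exact ⟨ofLp c, rfl⟩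
  · rintro ⟨c, hc⟩
    exact ⟨toLp 2 c, by rw [toLpLin_toLp, toLin'_apply, ← hc, toLp_ofLp]⟩

lemma inner_sub_mulVec_mul_transpose_eq_zero [Fintype m] {Q : Matrix m n ℝ} (hQ : Qᵀ * Q = 1)
    (x : m → ℝ) :
    ∀ u ∈ LinearMap.range (toLpLin 2 2 Q), ⟪toLp 2 (x - (Q * Qᵀ) *ᵥ x), u⟫ = 0 := by
  intro u hu
  obtain ⟨c, hc⟩ := mem_range_toLpLin_iff.mp hu
  have hQT : Qᵀ *ᵥ (x - (Q * Qᵀ) *ᵥ x) = 0 := by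
    rw [mulVec_sub, mulVec_mulVec, ← Matrix.mul_assoc, hQ, Matrix.one_mul, sub_self]
  rw [← toLp_ofLp 2 u, EuclideanSpace.inner_toLp_toLp, star_trivial, hc, dotProduct_comm,
    dotProduct_mulVec, ← mulVec_transpose, hQT, zero_dotProduct]

end Matrix

theorem stmt3_general {n k : ℕ} (A : Matrix (Fin n) (Fin n) ℝ)
    (g : Fin n → ℝ) (Δ : ℝ) (hΔ : 0 < Δ) (lopt : ℝ)
    (xopt : Fin n → ℝ)
    (hpsd : (A + lopt • 1).PosSemidef)
    (Q : Matrix (Fin n) (Fin k) ℝ) (hQ : Qᵀ * Q = 1)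
    (xk : Fin n → ℝ) (hxkmem : ∃ c, xk = Q.mulVec c)
    (hxknorm : Real.sqrt (xk ⬝ᵥ xk) = Δ)
    (hxoptnorm : Real.sqrt (xopt ⬝ᵥ xopt) = Δ)
    (hmin : ∀ x : Fin n → ℝ, (∃ c, x = Q.mulVec c) → Real.sqrt (x ⬝ᵥ x) ≤ Δ →
      fobj A g xk ≤ fobj A g x)
    (hquad : ∀ x : Fin n → ℝ, Real.sqrt (x ⬝ᵥ x) = Δ →
      fobj A g x - fobj A g xopt
        = (1/2) * ((xopt - x) ⬝ᵥ (A + lopt • 1).mulVec (xopt - x)))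
    (ε : ℝ)
    (hε : ε = Real.sqrt ((xopt - (Q * Qᵀ).mulVec xopt) ⬝ᵥ (xopt - (Q * Qᵀ).mulVec xopt))) :
    0 ≤ fobj A g xk - fobj A g xopt ∧
      fobj A g xk - fobj A g xopt ≤
        (1/2) * ‖(Matrix.toEuclideanCLM (𝕜 := ℝ) (A + lopt • 1) : EuclideanSpace ℝ (Fin n) →L[ℝ] EuclideanSpace ℝ (Fin n))‖ *
          (1 + ε^2 / Δ^2) * ε^2 := by
  refine ⟨?_, ?_⟩
  · have := hpsd.dotProduct_mulVec_nonneg (xopt - xk)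
    rw [star_trivial] at this
    linarith [hquad xk hxknorm]
  obtain ⟨y, hyK, hyΔ, hdist⟩ :=
    exists_mem_norm_eq_norm_sub_sq_le (K := LinearMap.range (toLpLin 2 2 Q))
      (x := toLp 2 xopt) (p := toLp 2 ((Q * Qᵀ) *ᵥ xopt)) hΔ
      (mem_range_toLpLin_iff.mpr ⟨Qᵀ *ᵥ xopt, by rw [ofLp_toLp, mulVec_mulVec]⟩)
      (by simpa only [toLp_sub] using inner_sub_mulVec_mul_transpose_eq_zero hQ xopt)
      (by rwa [norm_toLp_eq_sqrt_dotProduct])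
      (mem_range_toLpLin_iff.mpr hxkmem) (by rwa [norm_toLp_eq_sqrt_dotProduct])
  obtain ⟨c, hc⟩ := mem_range_toLpLin_iff.mp hyK
  have hεnorm : ‖toLp 2 xopt - toLp 2 ((Q * Qᵀ) *ᵥ xopt)‖ = ε := by
    rw [← toLp_sub, norm_toLp_eq_sqrt_dotProduct, hε]
  rw [← toLp_ofLp 2 y, hc] at hyΔ hdist
  rw [norm_toLp_eq_sqrt_dotProduct] at hyΔ
  rw [hεnorm, ← toLp_sub] at hdist
  set C := ‖toEuclideanCLM (n := Fin n) (𝕜 := ℝ) (A + lopt • 1)‖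
  calc fobj A g xk - fobj A g xopt ≤ fobj A g (Q *ᵥ c) - fobj A g xopt := by
        linarith [hmin _ ⟨c, rfl⟩ hyΔ.le]
    _ = (1/2) * ((xopt - Q *ᵥ c) ⬝ᵥ (A + lopt • 1) *ᵥ (xopt - Q *ᵥ c)) := hquad _ hyΔ
    _ ≤ (1/2) * (C * ‖toLp 2 (xopt - Q *ᵥ c)‖ ^ 2) := by
        gcongr
        exact dotProduct_mulVec_le_opNorm_mul_sq _ _
    _ ≤ (1/2) * (C * ((1 + ε ^ 2 / Δ ^ 2) * ε ^ 2)) := by gcongr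
    _ = _ := by ring

theorem stmt3 {n k : ℕ} (A : Matrix (Fin n) (Fin n) ℝ) (hA : A.IsSymm)
    (g : Fin n → ℝ) (Δ : ℝ) (hΔ : 0 < Δ) (lopt : ℝ) (hlopt : 0 ≤ lopt)
    (xopt : Fin n → ℝ)
    (hpsd : (A + lopt • 1).PosSemidef)
    (heq : (A + lopt • 1).mulVec xopt = -g)
    (Q : Matrix (Fin n) (Fin k) ℝ) (hQ : Qᵀ * Q = 1)
    (xk : Fin n → ℝ) (hxkmem : ∃ c, xk = Q.mulVec c)
    (hxknorm : Real.sqrt (xk ⬝ᵥ xk) = Δ)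
    (hxoptnorm : Real.sqrt (xopt ⬝ᵥ xopt) = Δ)
    (hmin : ∀ x : Fin n → ℝ, (∃ c, x = Q.mulVec c) → Real.sqrt (x ⬝ᵥ x) ≤ Δ →
      fobj A g xk ≤ fobj A g x)
    (hquad : ∀ x : Fin n → ℝ, Real.sqrt (x ⬝ᵥ x) = Δ →
      fobj A g x - fobj A g xopt
        = (1/2) * ((xopt - x) ⬝ᵥ (A + lopt • 1).mulVec (xopt - x)))
    (ε : ℝ)
    (hε : ε = Real.sqrt ((xopt - (Q * Qᵀ).mulVec xopt) ⬝ᵥ (xopt - (Q * Qᵀ).mulVec xopt))) :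
    0 ≤ fobj A g xk - fobj A g xopt ∧
      fobj A g xk - fobj A g xopt ≤
        (1/2) * ‖(Matrix.toEuclideanCLM (𝕜 := ℝ) (A + lopt • 1) : EuclideanSpace ℝ (Fin n) →L[ℝ] EuclideanSpace ℝ (Fin n))‖ *
          (1 + ε^2 / Δ^2) * ε^2 :=
  stmt3_general A g Δ hΔ lopt xopt hpsd Q hQ xk hxkmem hxknorm hxoptnorm hmin hquad ε hε
end

section
/- Under the same assumptions, with A_opt = A + λ_opt I positive definite, smallest eigenvalue α_n + λ_opt > 0 and κ = ||A_opt||/(α_n+λ_opt), one has ||x_k - x_opt|| ≤ sqrt(κ (1 + ε_k^2/Δ^2)) · ε_k. -/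
/-! In the eigenbasis `w = Uᵀ d` of `A_opt`, the quadratic form `dᵀ A_opt d` is `∑ λᵢ wᵢ²` and
`‖d‖² = ∑ wᵢ²`, so the form is at least `(min λᵢ) ‖d‖²`. Hence
`(α_n + λ_opt) ‖x_k - x_opt‖² ≤ 2 (f(x_k) - f(x_opt)) ≤ ‖A_opt‖ (1 + ε_k²/Δ²) ε_k²`;
dividing by `α_n + λ_opt` and taking square roots gives the bound. -/

open Matrix

theorem Matrix.IsHermitian.iInf_eigenvalues_mul_dotProduct_self_le {n : ℕ}
    {B : Matrix (Fin n) (Fin n) ℝ} (hB : B.IsHermitian) (d : Fin n → ℝ) :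
    (⨅ i, hB.eigenvalues i) * (d ⬝ᵥ d) ≤ d ⬝ᵥ B *ᵥ d := by
  set U : Matrix (Fin n) (Fin n) ℝ := (hB.eigenvectorUnitary : Matrix (Fin n) (Fin n) ℝ)
  have hUUt : U * Uᵀ = 1 := (Matrix.mem_unitaryGroup_iff).mp hB.eigenvectorUnitary.2
  set w : Fin n → ℝ := Uᵀ *ᵥ d with hw
  have hnorm : d ⬝ᵥ d = w ⬝ᵥ w := by
    rw [hw, dotProduct_mulVec, vecMul_transpose, mulVec_mulVec, hUUt, one_mulVec]
  have hform : d ⬝ᵥ B *ᵥ d = ∑ i, hB.eigenvalues i * (w i * w i) := by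
    have hspectral : B = U * diagonal (RCLike.ofReal ∘ hB.eigenvalues) * Uᵀ := hB.spectral_theorem
    conv_lhs => rw [hspectral]
    rw [← mulVec_mulVec, ← mulVec_mulVec, dotProduct_mulVec, ← mulVec_transpose, ← hw]
    simp [mulVec_diagonal, dotProduct, mul_left_comm]
  rw [hnorm, hform, dotProduct, Finset.mul_sum]
  refine Finset.sum_le_sum fun i _ => ?_
  exact mul_le_mul_of_nonneg_right (ciInf_le (Finite.bddBelow_range _) i) (mul_self_nonneg _)

theorem stmt4_general {n k : ℕ} (A : Matrix (Fin n) (Fin n) ℝ)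
    (g : Fin n → ℝ) (Δ : ℝ) (lopt : ℝ)
    (xopt xk : Fin n → ℝ)
    (hpd : (A + lopt • 1).PosDef)
    (Q : Matrix (Fin n) (Fin k) ℝ)
    (ε : ℝ)
    (hε : ε = Real.sqrt ((xopt - (Q * Qᵀ).mulVec xopt) ⬝ᵥ (xopt - (Q * Qᵀ).mulVec xopt)))
    (μ : ℝ) (hμ : μ = ⨅ i, hpd.1.eigenvalues i) (hμpos : 0 < μ)
    (κ : ℝ) (hκ : κ = ‖(Matrix.toEuclideanCLM (𝕜 := ℝ) (A + lopt • 1) : EuclideanSpace ℝ (Fin n) →L[ℝ] EuclideanSpace ℝ (Fin n))‖ / μ)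
    (hquadeq : fobj A g xk - fobj A g xopt
      = (1/2) * ((xopt - xk) ⬝ᵥ (A + lopt • 1).mulVec (xopt - xk)))
    (hquadle : fobj A g xk - fobj A g xopt
      ≤ (1/2) * ‖(Matrix.toEuclideanCLM (𝕜 := ℝ) (A + lopt • 1) : EuclideanSpace ℝ (Fin n) →L[ℝ] EuclideanSpace ℝ (Fin n))‖ * (1 + ε^2 / Δ^2) * ε^2) :
    Real.sqrt ((xk - xopt) ⬝ᵥ (xk - xopt)) ≤ Real.sqrt (κ * (1 + ε^2 / Δ^2)) * ε := by
  set N := ‖(Matrix.toEuclideanCLM (𝕜 := ℝ) (A + lopt • 1) : EuclideanSpace ℝ (Fin n) →L[ℝ] EuclideanSpace ℝ (Fin n))‖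
  set d := xopt - xk
  have hε_nonneg : 0 ≤ ε := hε ▸ Real.sqrt_nonneg _
  have hκ_nonneg : 0 ≤ κ := hκ ▸ div_nonneg (norm_nonneg _) hμpos.le
  have hlower : μ * (d ⬝ᵥ d) ≤ N * (1 + ε^2 / Δ^2) * ε^2 := by
    have := hμ ▸ hpd.1.iInf_eigenvalues_mul_dotProduct_self_le d
    linarith
  have hdd : d ⬝ᵥ d ≤ κ * (1 + ε^2 / Δ^2) * ε^2 := by
    rw [hκ, div_mul_eq_mul_div, div_mul_eq_mul_div, le_div_iff₀ hμpos]
    linarith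
  have hswap : (xk - xopt) ⬝ᵥ (xk - xopt) = d ⬝ᵥ d := by
    rw [← neg_sub, neg_dotProduct, dotProduct_neg, neg_neg]
  calc Real.sqrt ((xk - xopt) ⬝ᵥ (xk - xopt))
      ≤ Real.sqrt (κ * (1 + ε^2 / Δ^2) * ε^2) := hswap ▸ Real.sqrt_le_sqrt hdd
    _ = Real.sqrt (κ * (1 + ε^2 / Δ^2)) * ε := by
      rw [Real.sqrt_mul (by positivity), Real.sqrt_sq hε_nonneg]

theorem stmt4 {n k : ℕ} (A : Matrix (Fin n) (Fin n) ℝ) (hA : A.IsSymm)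
    (g : Fin n → ℝ) (Δ : ℝ) (hΔ : 0 < Δ) (lopt : ℝ) (hlopt : 0 ≤ lopt)
    (xopt xk : Fin n → ℝ)
    (hpd : (A + lopt • 1).PosDef)
    (Q : Matrix (Fin n) (Fin k) ℝ) (hQ : Qᵀ * Q = 1)
    (hxknorm : Real.sqrt (xk ⬝ᵥ xk) = Δ)
    (hxoptnorm : Real.sqrt (xopt ⬝ᵥ xopt) = Δ)
    (ε : ℝ)
    (hε : ε = Real.sqrt ((xopt - (Q * Qᵀ).mulVec xopt) ⬝ᵥ (xopt - (Q * Qᵀ).mulVec xopt)))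
    (μ : ℝ) (hμ : μ = ⨅ i, hpd.1.eigenvalues i) (hμpos : 0 < μ)
    (κ : ℝ) (hκ : κ = ‖(Matrix.toEuclideanCLM (𝕜 := ℝ) (A + lopt • 1) : EuclideanSpace ℝ (Fin n) →L[ℝ] EuclideanSpace ℝ (Fin n))‖ / μ)
    (hquadeq : fobj A g xk - fobj A g xopt
      = (1/2) * ((xopt - xk) ⬝ᵥ (A + lopt • 1).mulVec (xopt - xk)))
    (hquadle : fobj A g xk - fobj A g xopt
      ≤ (1/2) * ‖(Matrix.toEuclideanCLM (𝕜 := ℝ) (A + lopt • 1) : EuclideanSpace ℝ (Fin n) →L[ℝ] EuclideanSpace ℝ (Fin n))‖ * (1 + ε^2 / Δ^2) * ε^2) :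
    Real.sqrt ((xk - xopt) ⬝ᵥ (xk - xopt)) ≤ Real.sqrt (κ * (1 + ε^2 / Δ^2)) * ε :=
  stmt4_general A g Δ lopt xopt xk hpd Q ε hε μ hμ hμpos κ hκ hquadeq hquadle
end

section
/- Let A be symmetric n×n with eigenvalues α_1 ≥ ... ≥ α_n, g ∈ R^n, Δ > 0, and M the 2n×2n matrix with blocks [-A, g g^T/Δ^2; I, -A]. Then for λ > -α_n, det(M - λI) = (-1)^n det([-I, A+λI; A+λI, -gg^T/Δ^2]) = det(A+λI)^2 (1 - g^T(A+λI)^{-2}g / Δ^2). -/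
open Matrix

theorem stmt9 {n : ℕ} (A : Matrix (Fin n) (Fin n) ℝ) (hA : A.IsSymm)
    (g : Fin n → ℝ) (Δ : ℝ) (hΔ : 0 < Δ) (l : ℝ)
    (hpd : (A + l • 1).PosDef)
    (M : Matrix (Fin n ⊕ Fin n) (Fin n ⊕ Fin n) ℝ)
    (hM : M = Matrix.fromBlocks (-A) ((Δ^2)⁻¹ • Matrix.vecMulVec g g) 1 (-A)) :
    (M - l • 1).det =
      (-1:ℝ)^n * (Matrix.fromBlocks (-1) (A + l • 1) (A + l • 1)
          (-((Δ^2)⁻¹ • Matrix.vecMulVec g g))).det ∧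
    (M - l • 1).det =
      (A + l • 1).det^2 * (1 - g ⬝ᵥ (((A + l • 1)⁻¹ ^ 2).mulVec g) / Δ^2) := by
  set B : Matrix (Fin n) (Fin n) ℝ := A + l • 1 with hB
  set C : Matrix (Fin n) (Fin n) ℝ := (Δ^2)⁻¹ • Matrix.vecMulVec g g with hC
  have hdet : IsUnit B.det := isUnit_iff_ne_zero.mpr (ne_of_gt hpd.det_pos)
  have hBinv : Invertible B := B.invertibleOfIsUnitDet hdet
  have hsq : ((-1:ℝ)^n) * ((-1:ℝ)^n) = 1 := by
    rw [← pow_add]; exact Even.neg_one_pow ⟨n, rfl⟩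
  -- rewrite M - l•1 as a block matrix
  have hMl : M - l • (1 : Matrix (Fin n ⊕ Fin n) (Fin n ⊕ Fin n) ℝ)
      = fromBlocks (-B) C 1 (-B) := by
    rw [hM]
    ext i j
    rcases i with i | i <;> rcases j with j | j <;>
      simp [hB, Matrix.sub_apply, Matrix.one_apply, Matrix.add_apply,
        Matrix.neg_apply, neg_add, sub_eq_add_neg, mul_ite] <;> ring
  have hBB : B * ⅟ B = 1 := mul_invOf_self B
  -- LHS equals det (B*B - C)
  have hL : (M - l • 1).det = (B * B - C).det := by
    rw [hMl]
    have hInvNeg : Invertible (-B) := invertibleNeg B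
    rw [det_fromBlocks₁₁]
    have h1 : ⅟ (-B) = -⅟ B := invOf_neg B
    rw [h1]
    have h2 : (-B - 1 * -⅟ B * C) = -(B - ⅟ B * C) := by
      rw [Matrix.one_mul, Matrix.neg_mul]; abel
    have h3 : B.det * (B - ⅟ B * C).det = (B * (B - ⅟ B * C)).det := (det_mul _ _).symm
    have h4 : B * (B - ⅟ B * C) = B * B - C := by
      rw [Matrix.mul_sub, ← Matrix.mul_assoc, hBB, Matrix.one_mul]
    rw [h2, det_neg, det_neg, Fintype.card_fin,
      mul_mul_mul_comm, hsq, one_mul, h3, h4]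
  -- the first claimed identity
  have hR1 : ((fromBlocks (-1 : Matrix (Fin n) (Fin n) ℝ) B B (-C)).det) =
      (-1:ℝ)^n * (B * B - C).det := by
    haveI : Invertible (1 : Matrix (Fin n) (Fin n) ℝ) := invertibleOne
    haveI : Invertible (-1 : Matrix (Fin n) (Fin n) ℝ) := invertibleNeg (1 : Matrix (Fin n) (Fin n) ℝ)
    rw [det_fromBlocks₁₁]
    have h1 : ⅟ (-1 : Matrix (Fin n) (Fin n) ℝ) = -1 := by
      rw [invOf_neg, invOf_one]
    have h2 : (-C - B * (-1 : Matrix (Fin n) (Fin n) ℝ) * B) = -(C - B * B) := by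
      rw [Matrix.mul_neg, Matrix.mul_one, Matrix.neg_mul]; abel
    have h4 : -(C - B * B) = B * B - C := neg_sub _ _
    rw [h1, h2, det_neg, Fintype.card_fin, det_one, mul_one, det_neg, Fintype.card_fin,
      ← h4, det_neg, Fintype.card_fin]
  -- the rank-one determinant computation
  have hInv2 : ⅟ B = B⁻¹ := invOf_eq_nonsing_inv B
  have hR2 : (B * B - C).det = B.det ^ 2 * (1 - g ⬝ᵥ ((B⁻¹ ^ 2).mulVec g) / Δ^2) := by
    have hkey : B * B * (⅟ B * ⅟ B * C) = C := by
      calc B * B * (⅟ B * ⅟ B * C) = B * (B * ⅟ B) * (⅟ B * C) := by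
            simp only [Matrix.mul_assoc]
        _ = C := by rw [hBB, Matrix.mul_one, ← Matrix.mul_assoc, hBB, Matrix.one_mul]
    have hfac : B * B - C = B * B * (1 - ⅟ B * ⅟ B * C) := by
      rw [Matrix.mul_sub, Matrix.mul_one, hkey]
    rw [hfac, det_mul, det_mul]
    have hcol : ⅟ B * ⅟ B * C = replicateCol Unit ((Δ^2)⁻¹ • ((⅟ B * ⅟ B) *ᵥ g)) * replicateRow Unit g := by
      rw [hC, vecMulVec_eq Unit, Matrix.mul_smul, ← Matrix.mul_assoc, ← replicateCol_mulVec,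
        replicateCol_smul, Matrix.smul_mul]
    have hneg : -(replicateCol Unit ((Δ^2)⁻¹ • ((⅟ B * ⅟ B) *ᵥ g)) * replicateRow Unit g)
        = replicateCol Unit (-((Δ^2)⁻¹ • ((⅟ B * ⅟ B) *ᵥ g))) * replicateRow Unit g := by
      ext i j
      simp [Matrix.mul_apply, mul_assoc]
    have hone : (1 : Matrix (Fin n) (Fin n) ℝ) - ⅟ B * ⅟ B * C
        = 1 + replicateCol Unit (-((Δ^2)⁻¹ • ((⅟ B * ⅟ B) *ᵥ g))) * replicateRow Unit g := by
      rw [hcol, sub_eq_add_neg, hneg]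
    rw [hone, det_one_add_replicateCol_mul_replicateRow]
    have hdp : g ⬝ᵥ -((Δ^2)⁻¹ • ((⅟ B * ⅟ B) *ᵥ g)) = -((Δ^2)⁻¹ * (g ⬝ᵥ ((⅟ B * ⅟ B) *ᵥ g))) := by
      simp
    rw [hdp, hInv2, pow_two B⁻¹]
    have hΔ2 : (Δ^2) ≠ 0 := by positivity
    field_simp
    ring
  refine ⟨?_, by rw [hL, hR2]⟩
  rw [hL, hR1, ← mul_assoc, hsq, one_mul]
end

section
/- Suppose the TRS is in the easy case with ||x_opt|| = Δ, i.e., A + λ_opt I ≻ 0, (A+λ_opt I)x_opt = -g, g ≠ 0. Then λ_opt is a simple eigenvalue of the matrix M = [[-A, gg^T/Δ^2],[I, -A]]: the derivative of det(M-λI) at λ = λ_opt is nonzero. -/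
/-!
Write `B λ = A + λ • 1`. Near `lopt` the matrix `B λ` is invertible, and the Schur complement of
the lower right block followed by the matrix determinant lemma give
`det (M - λ • 1) = det (B λ) ^ 2 * (1 - ‖(B λ)⁻¹ g‖² / Δ²)`.
The second factor vanishes at `lopt` because `(B lopt)⁻¹ g = -xopt`, so the derivative there is
`det (B lopt) ^ 2` times the derivative of that factor, namely
`2 ⟪xopt, (B lopt)⁻¹ xopt⟫ / Δ²`, which is positive since `(B lopt)⁻¹` is positive definite.
-/

open Matrix Filter Topology

variable {n : Type*} [Fintype n]

section Calculus

variable {𝕜 : Type*} [NontriviallyNormedField 𝕜]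

theorem HasDerivAt.mulVec {m : Type*} {f : 𝕜 → Matrix m n 𝕜} {f' : Matrix m n 𝕜} {t : 𝕜}
    (hf : HasDerivAt f f' t) (v : n → 𝕜) :
    HasDerivAt (fun s => f s *ᵥ v) (f' *ᵥ v) t :=
  hasDerivAt_pi.2 fun i => HasDerivAt.fun_sum fun j _ =>
    (hasDerivAt_pi.1 (hasDerivAt_pi.1 hf i) j).mul_const (v j)

theorem HasDerivAt.dotProduct {f g : 𝕜 → n → 𝕜} {f' g' : n → 𝕜} {t : 𝕜}
    (hf : HasDerivAt f f' t) (hg : HasDerivAt g g' t) :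
    HasDerivAt (fun s => f s ⬝ᵥ g s) (f' ⬝ᵥ g t + f t ⬝ᵥ g') t := by
  unfold _root_.dotProduct
  rw [← Finset.sum_add_distrib]
  exact HasDerivAt.fun_sum fun i _ => (hasDerivAt_pi.1 hf i).mul (hasDerivAt_pi.1 hg i)

theorem HasDerivAt.mul_of_eq_zero {p q : 𝕜 → 𝕜} {p' q' t : 𝕜} (hp : HasDerivAt p p' t)
    (hq : HasDerivAt q q' t) (hq0 : q t = 0) :
    HasDerivAt (fun s => p s * q s) (p t * q') t := by
  simpa [hq0] using hp.fun_mul hq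

end Calculus

namespace Matrix

variable [DecidableEq n]

section CommRing

variable {R : Type*} [CommRing R]

theorem det_fromBlocks_neg_one_neg {B : Matrix n n R} (hB : IsUnit B.det) (K : Matrix n n R) :
    (fromBlocks (-B) K 1 (-B)).det = (B * B - K).det := by
  have := B.invertibleOfIsUnitDet hB
  have := invertibleNeg B
  rw [det_fromBlocks₂₂, invOf_neg, mul_comm, ← det_mul]
  congr 1
  rw [Matrix.mul_one, Matrix.mul_neg, Matrix.sub_mul, Matrix.neg_mul, Matrix.mul_neg,
    Matrix.neg_mul, Matrix.mul_assoc, invOf_mul_self, Matrix.mul_one]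
  abel

theorem det_one_sub_smul_vecMulVec_self (c : R) (y : n → R) :
    (1 - c • vecMulVec y y).det = 1 - c * (y ⬝ᵥ y) := by
  rw [sub_eq_add_neg, ← neg_smul, ← smul_vecMulVec, vecMulVec_eq Unit,
    det_one_add_replicateCol_mul_replicateRow, dotProduct_smul, smul_eq_mul, neg_mul,
    ← sub_eq_add_neg, dotProduct_comm]

theorem det_mul_self_sub_smul_vecMulVec {B : Matrix n n R} {g y : n → R}
    (hy : B *ᵥ y = g) (hy' : y ᵥ* B = g) (c : R) :
    (B * B - c • vecMulVec g g).det = B.det ^ 2 * (1 - c * (y ⬝ᵥ y)) := by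
  have : B * B - c • vecMulVec g g = B * (1 - c • vecMulVec y y) * B := by
    rw [Matrix.mul_sub, Matrix.sub_mul, Matrix.mul_one, Matrix.mul_smul, Matrix.smul_mul,
      mul_vecMulVec, vecMulVec_mul, hy, hy']
  rw [this, det_mul, det_mul, det_one_sub_smul_vecMulVec_self]
  ring

theorem det_add_smul_one_eq_eval_charpoly (A : Matrix n n R) (s : R) :
    (A + s • 1).det = (-A).charpoly.eval s := by
  rw [eval_charpoly, sub_neg_eq_add, add_comm, scalar_apply, smul_one_eq_diagonal]

theorem det_fromBlocks_sub_smul_one {A : Matrix n n R} (hA : A.IsSymm) (g : n → R) (c : R)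
    {s : R} (hs : IsUnit (A + s • 1).det) :
    (fromBlocks (-A) (c • vecMulVec g g) 1 (-A) - s • 1).det =
      (A + s • 1).det ^ 2 * (1 - c * ((A + s • 1)⁻¹ *ᵥ g ⬝ᵥ (A + s • 1)⁻¹ *ᵥ g)) := by
  have hblocks : fromBlocks (-A) (c • vecMulVec g g) 1 (-A) - s • 1 =
      fromBlocks (-(A + s • 1)) (c • vecMulVec g g) 1 (-(A + s • 1)) := by
    rw [← fromBlocks_one, fromBlocks_smul, sub_eq_add_neg, fromBlocks_neg, fromBlocks_add]
    simp only [smul_zero, neg_zero, add_zero, neg_add]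
  have hy : (A + s • 1) *ᵥ ((A + s • 1)⁻¹ *ᵥ g) = g := by
    rw [mulVec_mulVec, mul_nonsing_inv _ hs, one_mulVec]
  have hy' : ((A + s • 1)⁻¹ *ᵥ g) ᵥ* (A + s • 1) = g := by
    rw [← mulVec_transpose, (hA.add (isSymm_one.smul s)).eq, hy]
  rw [hblocks, det_fromBlocks_neg_one_neg hs, det_mul_self_sub_smul_vecMulVec hy hy']

end CommRing

variable {𝕜 : Type*} [NontriviallyNormedField 𝕜]

theorem differentiable_det_add_smul_one (A : Matrix n n 𝕜) :
    Differentiable 𝕜 fun s : 𝕜 => (A + s • 1).det := by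
  simp only [det_add_smul_one_eq_eval_charpoly]
  exact (-A).charpoly.differentiable

section Resolvent

attribute [local instance] Matrix.linftyOpNormedRing Matrix.linftyOpNormedAlgebra

theorem hasDerivAt_inv_add_smul_one [CompleteSpace 𝕜] {A : Matrix n n 𝕜} {t : 𝕜}
    (ht : IsUnit (A + t • 1).det) :
    HasDerivAt (fun s => (A + s • 1)⁻¹) (-((A + t • 1)⁻¹ ^ 2)) t := by
  have hres : ∀ s : 𝕜, (A + s • 1)⁻¹ = resolvent (-A) s := fun s => by
    rw [resolvent, Algebra.algebraMap_eq_smul_one, sub_neg_eq_add, add_comm,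
      nonsing_inv_eq_ringInverse]
  have hmem : t ∈ resolventSet 𝕜 (-A) := by
    rw [spectrum.mem_resolventSet_iff, Algebra.algebraMap_eq_smul_one, sub_neg_eq_add, add_comm,
      isUnit_iff_isUnit_det]
    exact ht
  simp only [hres]
  -- Instance search only knows completeness for the product uniformity on matrices, which agrees
  -- with the operator-norm uniformity only after unfolding, so the instance is supplied by hand.
  exact @spectrum.hasDerivAt_resolvent_const_left _ _ _ _ _ (FiniteDimensional.complete 𝕜 _)
    _ _ hmem

end Resolvent

theorem hasDerivAt_inv_add_smul_one_mulVec_dotProduct_self [CompleteSpace 𝕜] {A : Matrix n n 𝕜}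
    (g : n → 𝕜) {t : 𝕜} (ht : IsUnit (A + t • 1).det) :
    HasDerivAt (fun s => (A + s • 1)⁻¹ *ᵥ g ⬝ᵥ (A + s • 1)⁻¹ *ᵥ g)
      (-2 * ((A + t • 1)⁻¹ *ᵥ g ⬝ᵥ (A + t • 1)⁻¹ *ᵥ ((A + t • 1)⁻¹ *ᵥ g))) t := by
  have hy := (hasDerivAt_inv_add_smul_one ht).mulVec g
  convert hy.dotProduct hy using 1
  rw [sq, neg_mulVec, ← mulVec_mulVec, neg_dotProduct, dotProduct_neg, dotProduct_comm]
  ring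

theorem hasDerivAt_det_fromBlocks_sub_smul_one [CompleteSpace 𝕜] {A : Matrix n n 𝕜}
    (hA : A.IsSymm) {g : n → 𝕜} {c t : 𝕜} (ht : IsUnit (A + t • 1).det)
    (hc : c * ((A + t • 1)⁻¹ *ᵥ g ⬝ᵥ (A + t • 1)⁻¹ *ᵥ g) = 1) :
    HasDerivAt (fun s => (fromBlocks (-A) (c • vecMulVec g g) 1 (-A) - s • 1).det)
      (2 * c * (A + t • 1).det ^ 2 *
        ((A + t • 1)⁻¹ *ᵥ g ⬝ᵥ (A + t • 1)⁻¹ *ᵥ ((A + t • 1)⁻¹ *ᵥ g))) t := by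
  have hev : (fun s => (fromBlocks (-A) (c • vecMulVec g g) 1 (-A) - s • 1).det) =ᶠ[𝓝 t]
      fun s => (A + s • 1).det ^ 2 * (1 - c * ((A + s • 1)⁻¹ *ᵥ g ⬝ᵥ (A + s • 1)⁻¹ *ᵥ g)) := by
    filter_upwards [(differentiable_det_add_smul_one A).continuous.continuousAt.eventually_ne
      ht.ne_zero] with s hs
    exact det_fromBlocks_sub_smul_one hA g c hs.isUnit
  have hderiv := ((differentiable_det_add_smul_one A t).fun_pow 2).hasDerivAt.mul_of_eq_zero
    (((hasDerivAt_inv_add_smul_one_mulVec_dotProduct_self g ht).const_mul c).const_sub 1)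
    (by rw [hc, sub_self])
  exact (hderiv.congr_of_eventuallyEq hev).congr_deriv (by ring)

end Matrix

theorem stmt10_general {n : ℕ} (A : Matrix (Fin n) (Fin n) ℝ) (hA : A.IsSymm)
    (g : Fin n → ℝ) (hg : g ≠ 0) (Δ : ℝ)
    (lopt : ℝ)
    (hpd : (A + lopt • 1).PosDef)
    (xopt : Fin n → ℝ) (heq : (A + lopt • 1).mulVec xopt = -g)
    (hxn : Real.sqrt (xopt ⬝ᵥ xopt) = Δ)
    (M : Matrix (Fin n ⊕ Fin n) (Fin n ⊕ Fin n) ℝ)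
    (hM : M = Matrix.fromBlocks (-A) ((Δ^2)⁻¹ • Matrix.vecMulVec g g) 1 (-A)) :
    deriv (fun l : ℝ => (M - l • 1).det) lopt ≠ 0 := by
  have hB : IsUnit (A + lopt • 1).det := hpd.det_pos.ne'.isUnit
  have hy : (A + lopt • 1)⁻¹ *ᵥ g = -xopt := by
    rw [← neg_neg g, ← heq, mulVec_neg, mulVec_mulVec, nonsing_inv_mul _ hB, one_mulVec]
  have hx : xopt ≠ 0 := by
    rintro rfl
    exact hg (by simpa using heq.symm)
  have hxx : xopt ⬝ᵥ xopt = Δ ^ 2 := by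
    rw [← hxn, Real.sq_sqrt (by simpa using dotProduct_star_self_nonneg xopt)]
  have hΔ : Δ ^ 2 ≠ 0 := hxx ▸ by simpa using (dotProduct_star_self_pos_iff.2 hx).ne'
  have hc : (Δ ^ 2)⁻¹ * ((A + lopt • 1)⁻¹ *ᵥ g ⬝ᵥ (A + lopt • 1)⁻¹ *ᵥ g) = 1 := by
    rw [hy, neg_dotProduct_neg, hxx, inv_mul_cancel₀ hΔ]
  have hpos : 0 < xopt ⬝ᵥ (A + lopt • 1)⁻¹ *ᵥ xopt := by
    simpa using hpd.inv.dotProduct_mulVec_pos hx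
  rw [hM, (hasDerivAt_det_fromBlocks_sub_smul_one hA hB hc).deriv, hy, mulVec_neg,
    neg_dotProduct_neg]
  have := hB.ne_zero
  positivity

theorem stmt10 {n : ℕ} (A : Matrix (Fin n) (Fin n) ℝ) (hA : A.IsSymm)
    (g : Fin n → ℝ) (hg : g ≠ 0) (Δ : ℝ) (hΔ : 0 < Δ)
    (lopt : ℝ) (hlopt : 0 ≤ lopt)
    (hpd : (A + lopt • 1).PosDef)
    (xopt : Fin n → ℝ) (heq : (A + lopt • 1).mulVec xopt = -g)
    (hxn : Real.sqrt (xopt ⬝ᵥ xopt) = Δ)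
    (M : Matrix (Fin n ⊕ Fin n) (Fin n ⊕ Fin n) ℝ)
    (hM : M = Matrix.fromBlocks (-A) ((Δ^2)⁻¹ • Matrix.vecMulVec g g) 1 (-A)) :
    deriv (fun l : ℝ => (M - l • 1).det) lopt ≠ 0 :=
  stmt10_general A hA g hg Δ lopt hpd xopt heq hxn M hM
end

section
/- If the TRS is in the hard case (λ_opt = -α_n, g ⊥ null(A - α_n I), and the multiplicity of α_n is s ≥ 1), then det(M - λI) = (α_n + λ)^{2s} · [∏_{i=1}^{n-s}(α_i+λ)^2 · (1 - ||p(λ)||^2/Δ^2)] where p(λ) = -Σ_{i=1}^{n-s} (u_i^T g / (α_i+λ)) u_i, so λ_opt is a multiple eigenvalue of M. -/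
/-!
Clearing the identity block by unitriangular block operations gives
`det (M - λI) = det ((A + λI)² - g gᵀ / Δ²)` with no invertibility assumption. In the eigenbasis
of `A` this is `diag ((αᵢ + λ)²) - h hᵀ / Δ²` with `h = Uᵀ g`. The hard-case hypothesis says that
`h` vanishes on the `αₙ`-eigenspace, so every zero diagonal entry sits in a zero column and the
matrix determinant lemma holds without any invertibility. Finally `‖p‖² = Σᵢ hᵢ² / (αᵢ + λ)²`
because `U` is orthogonal.
-/

open Matrix

namespace Matrix

variable {m : Type*} [Fintype m]

theorem det_fromBlocks_one₂₁_self {R : Type*} [CommRing R] [DecidableEq m] (X B : Matrix m m R) :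
    (fromBlocks X B 1 X).det = (X * X - B).det := by
  have hreduce : fromBlocks 1 0 (-1) 1 * (fromBlocks 1 (1 - X) 0 1 * fromBlocks X B 1 X *
      fromBlocks 1 (-X) 0 1) = fromBlocks 1 (B - X * X) 0 (X * X - B) := by
    simp only [fromBlocks_multiply]
    congr 1 <;> noncomm_ring
  simpa [det_fromBlocks_zero₂₁, det_fromBlocks_zero₁₂] using congrArg det hreduce

theorem det_one_add_vecMulVec {R : Type*} [CommRing R] [DecidableEq m] (a b : m → R) :
    (1 + vecMulVec a b).det = 1 + b ⬝ᵥ a := by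
  rw [vecMulVec_eq (Fin 1)]
  exact det_one_add_replicateCol_mul_replicateRow a b

theorem det_diagonal_sub_vecMulVec {K : Type*} [Field K] [DecidableEq m] (d u v : m → K)
    (hv : ∀ i, d i = 0 → v i = 0) :
    (diagonal d - vecMulVec u v).det = (∏ i, d i) * (1 - ∑ i, u i * v i / d i) := by
  by_cases hd : ∃ j, d j = 0
  · obtain ⟨j, hj⟩ := hd
    rw [Finset.prod_eq_zero (Finset.mem_univ j) hj, zero_mul]
    refine det_eq_zero_of_column_eq_zero j fun i => ?_
    by_cases hij : i = j <;> simp [hij, hj, vecMulVec_apply, hv j hj]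
  · push Not at hd
    have hfactor : diagonal d - vecMulVec u v = diagonal d * (1 + vecMulVec (-(u / d)) v) := by
      rw [Matrix.mul_add, Matrix.mul_one, mul_vecMulVec, sub_eq_add_neg, ← neg_vecMulVec]
      congr 3
      ext i
      simp [mulVec_diagonal, mul_div_cancel₀ _ (hd i)]
    rw [hfactor, det_mul, det_diagonal, det_one_add_vecMulVec, dotProduct_neg, ← sub_eq_add_neg]
    congr 2
    simp only [dotProduct, Pi.div_apply]
    exact Finset.sum_congr rfl fun i _ => by ring

theorem det_conj_of_transpose_mul_self {R : Type*} [CommRing R] [DecidableEq m]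
    {U : Matrix m m R} (hU : Uᵀ * U = 1) (N : Matrix m m R) : (U * N * Uᵀ).det = N.det := by
  rw [det_mul, det_mul, mul_right_comm, mul_comm U.det, ← det_mul, hU, det_one, one_mul]

theorem mulVec_dotProduct_mulVec_of_transpose_mul_self {R : Type*} [CommSemiring R]
    [DecidableEq m] {U : Matrix m m R} (hU : Uᵀ * U = 1) (v w : m → R) :
    U *ᵥ v ⬝ᵥ U *ᵥ w = v ⬝ᵥ w := by
  rw [dotProduct_mulVec, ← vecMul_transpose, vecMul_vecMul, hU, vecMul_one]

theorem sq_sub_smul_vecMulVec_eq_conj {R : Type*} [CommRing R] [DecidableEq m] {U : Matrix m m R}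
    (hU : Uᵀ * U = 1) (α : m → R) (l c : R) (g : m → R) :
    (-(U * diagonal α * Uᵀ) - l • 1) * (-(U * diagonal α * Uᵀ) - l • 1) - c • vecMulVec g g
      = U * (diagonal (fun i => (α i + l) ^ 2) - vecMulVec (c • (Uᵀ *ᵥ g)) (Uᵀ *ᵥ g)) * Uᵀ := by
  have hUU : U * Uᵀ = 1 := mul_eq_one_comm.mp hU
  have hshift : U * diagonal α * Uᵀ + l • 1 = U * diagonal (fun i => α i + l) * Uᵀ := by
    rw [← diagonal_add, ← smul_one_eq_diagonal, Matrix.mul_add, Matrix.add_mul, Matrix.mul_smul,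
      Matrix.mul_one, Matrix.smul_mul, hUU]
  have hsq : diagonal (fun i => (α i + l) ^ 2)
      = diagonal (fun i => α i + l) * diagonal (fun i => α i + l) := by
    rw [diagonal_mul_diagonal]; simp only [sq]
  have hrank : vecMulVec g g = U * vecMulVec (Uᵀ *ᵥ g) (Uᵀ *ᵥ g) * Uᵀ := by
    rw [mul_vecMulVec, vecMulVec_mul, vecMul_transpose, mulVec_mulVec, hUU, one_mulVec]
  rw [← neg_add', neg_mul_neg, hshift, hrank, hsq, smul_vecMulVec, Matrix.mul_sub, Matrix.sub_mul,
    Matrix.mul_smul, Matrix.smul_mul]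
  simp only [Matrix.mul_assoc]
  rw [← Matrix.mul_assoc Uᵀ U, hU, Matrix.one_mul]

end Matrix

theorem Fin.prod_eq_pow_mul_prod_filter_val_lt {M : Type*} [CommMonoid M] {n : ℕ} (s : ℕ)
    (hsn : s ≤ n) (f : Fin n → M) (a : M) (hf : ∀ i : Fin n, n - s ≤ (i : ℕ) → f i = a) :
    ∏ i, f i = a ^ s * ∏ i ∈ Finset.univ.filter (fun i : Fin n => (i : ℕ) < n - s), f i := by
  rw [← Finset.prod_filter_mul_prod_filter_not Finset.univ (fun i : Fin n => (i : ℕ) < n - s),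
    mul_comm, Finset.prod_congr rfl fun i hi => hf i (not_lt.mp (Finset.mem_filter.mp hi).2),
    Finset.prod_const]
  congr 2
  have hcard := Finset.card_filter_add_card_filter_not (s := Finset.univ)
    (fun i : Fin n => (i : ℕ) < n - s)
  rw [Fin.card_filter_val_lt, Finset.card_univ, Fintype.card_fin] at hcard
  omega

theorem stmt11_general {n : ℕ} (s : ℕ) (hsn : s ≤ n)
    (α : Fin n → ℝ) (U : Matrix (Fin n) (Fin n) ℝ) (hU : Uᵀ * U = 1)
    (A : Matrix (Fin n) (Fin n) ℝ) (hA : A = U * Matrix.diagonal α * Uᵀ)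
    (αn : ℝ)
    (hαeq : ∀ i : Fin n, n - s ≤ (i:ℕ) → α i = αn)
    (hαgt : ∀ i : Fin n, (i:ℕ) < n - s → αn < α i)
    (g : Fin n → ℝ) (Δ : ℝ)
    (hgperp : ∀ i : Fin n, n - s ≤ (i:ℕ) → (fun j => U j i) ⬝ᵥ g = 0)
    (M : Matrix (Fin n ⊕ Fin n) (Fin n ⊕ Fin n) ℝ)
    (hM : M = Matrix.fromBlocks (-A) ((Δ^2)⁻¹ • Matrix.vecMulVec g g) 1 (-A))
    (l : ℝ) (hl : -αn ≤ l)
    (p : Fin n → ℝ)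
    (hp : p = -∑ i ∈ Finset.univ.filter (fun i : Fin n => (i:ℕ) < n - s),
        (((fun j => U j i) ⬝ᵥ g) / (α i + l)) • (fun j => U j i)) :
    (M - l • 1).det =
      (αn + l)^(2*s) *
        ((∏ i ∈ Finset.univ.filter (fun i : Fin n => (i:ℕ) < n - s), (α i + l)^2) *
          (1 - (p ⬝ᵥ p) / Δ^2)) := by
  set h := Uᵀ *ᵥ g
  have hblocks : M - l • 1 = fromBlocks (-A - l • 1) ((Δ^2)⁻¹ • vecMulVec g g) 1 (-A - l • 1) := by
    rw [hM, ← fromBlocks_one, fromBlocks_smul]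
    ext (i | i) (j | j) <;> simp
  have hp' : p = -(U *ᵥ fun i => h i / (α i + l)) := by
    rw [hp, mulVec_eq_sum, Finset.sum_filter_of_ne]
    · simp only [op_smul_eq_smul]
      rfl
    · intro i _ hne
      by_contra hi
      exact hne (by rw [hgperp i (not_lt.mp hi), zero_div, zero_smul])
  have hd : ∀ i, (α i + l) ^ 2 = 0 → h i = 0 := by
    intro i hi0
    by_cases hi : (i : ℕ) < n - s
    · exact absurd hi0 (pow_pos (by linarith [hαgt i hi]) 2).ne'
    · exact hgperp i (not_lt.mp hi)
  rw [hblocks, det_fromBlocks_one₂₁_self, hA, sq_sub_smul_vecMulVec_eq_conj hU,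
    det_conj_of_transpose_mul_self hU, det_diagonal_sub_vecMulVec _ _ _ hd]
  rw [Fin.prod_eq_pow_mul_prod_filter_val_lt s hsn _ _ fun i hi => by rw [hαeq i hi], ← pow_mul,
    hp', dotProduct_neg, neg_dotProduct, neg_neg, mulVec_dotProduct_mulVec_of_transpose_mul_self hU]
  simp only [dotProduct, Finset.sum_div, Pi.smul_apply, smul_eq_mul]
  rw [mul_assoc]
  congr 3
  exact Finset.sum_congr rfl fun i _ => by generalize α i + l = x; ring

theorem stmt11 {n : ℕ} (s : ℕ) (hs : 1 ≤ s) (hsn : s ≤ n)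
    (α : Fin n → ℝ) (U : Matrix (Fin n) (Fin n) ℝ) (hU : Uᵀ * U = 1)
    (A : Matrix (Fin n) (Fin n) ℝ) (hA : A = U * Matrix.diagonal α * Uᵀ)
    (αn : ℝ)
    (hαeq : ∀ i : Fin n, n - s ≤ (i:ℕ) → α i = αn)
    (hαgt : ∀ i : Fin n, (i:ℕ) < n - s → αn < α i)
    (g : Fin n → ℝ) (Δ : ℝ) (hΔ : 0 < Δ)
    (hgperp : ∀ i : Fin n, n - s ≤ (i:ℕ) → (fun j => U j i) ⬝ᵥ g = 0)
    (M : Matrix (Fin n ⊕ Fin n) (Fin n ⊕ Fin n) ℝ)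
    (hM : M = Matrix.fromBlocks (-A) ((Δ^2)⁻¹ • Matrix.vecMulVec g g) 1 (-A))
    (l : ℝ) (hl : -αn ≤ l)
    (p : Fin n → ℝ)
    (hp : p = -∑ i ∈ Finset.univ.filter (fun i : Fin n => (i:ℕ) < n - s),
        (((fun j => U j i) ⬝ᵥ g) / (α i + l)) • (fun j => U j i)) :
    (M - l • 1).det =
      (αn + l)^(2*s) *
        ((∏ i ∈ Finset.univ.filter (fun i : Fin n => (i:ℕ) < n - s), (α i + l)^2) *
          (1 - (p ⬝ᵥ p) / Δ^2)) :=
  stmt11_general s hsn α U hU A hA αn hαeq hαgt g Δ hgperp M hM l hl p hp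
end

section
/- Let T ≻ 0 be symmetric k×k and 0 ≤ λ_k ≤ λ_opt with T + λ_k I ≻ 0. Then (T+λ_k I)^{-1}(T+λ_opt I)^{-1}((T+λ_k I)^{-1} + (T+λ_opt I)^{-1}) ⪰ 2(T+λ_opt I)^{-3} in the Loewner order. -/
/-!
Put `P = T + λ_k I`, `Q = T + λ_opt I = P + d I` with `d = λ_opt - λ_k ≥ 0`, `a = P⁻¹`, `b = Q⁻¹`.
Since `a` and `b` commute, `ab(a + b) - 2b³ = 3 b(a - b)b + (a - b)b(a - b)`, and both terms are
congruences of positive semidefinite matrices: `b ⪰ 0`, and `a - b = d (QP)⁻¹ ⪰ 0` because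
`QP = P² + dP`.
-/

open Matrix
open scoped ComplexOrder

theorem Commute.mul_mul_add_sub_two_smul_pow_three {S A : Type*} [CommRing S] [Ring A]
    [Algebra S A] {a b : A} (h : Commute a b) :
    a * b * (a + b) - (2 : S) • b ^ 3 = (3 : S) • (b * (a - b) * b) + (a - b) * b * (a - b) := by
  simp only [mul_add, mul_sub, sub_mul, pow_succ, pow_zero, one_mul, mul_assoc, h.symm.eq,
    h.symm.left_comm]
  module

namespace Matrix

variable {n 𝕜 : Type*} [RCLike 𝕜]

theorem PosSemidef.mul_mul_of_isHermitian [Fintype n] {A B : Matrix n n 𝕜} (hA : A.PosSemidef)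
    (hB : B.IsHermitian) : (B * A * B).PosSemidef := by
  simpa only [hB.eq] using hA.mul_mul_conjTranspose_same B

theorem PosDef.add_smul_one [DecidableEq n] {P : Matrix n n 𝕜} (hP : P.PosDef) {d : ℝ}
    (hd : 0 ≤ d) : (P + d • 1).PosDef :=
  hP.add_posSemidef (PosSemidef.one.smul hd)

variable [Fintype n] [DecidableEq n]

theorem PosDef.posSemidef_inv_sub_inv_add_smul_one {P : Matrix n n 𝕜} (hP : P.PosDef) {d : ℝ}
    (hd : 0 ≤ d) : (P⁻¹ - (P + d • 1)⁻¹).PosSemidef := by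
  have hQP : (P + d • 1) * P = P ^ 2 + d • P := by
    rw [add_mul, smul_mul_assoc, one_mul, sq]
  have h : P⁻¹ - (P + d • 1)⁻¹ = d • ((P + d • 1) * P)⁻¹ := by
    rw [inv_sub_inv (by simp [hP.isUnit, (hP.add_smul_one hd).isUnit]), add_sub_cancel_left,
      mul_smul_comm, mul_one, smul_mul_assoc, mul_inv_rev]
  rw [h, hQP]
  exact ((hP.posSemidef.pow 2).add (hP.posSemidef.smul hd)).inv.smul hd

theorem PosDef.posSemidef_inv_mul_inv_mul_add_sub {P : Matrix n n 𝕜} (hP : P.PosDef) {d : ℝ}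
    (hd : 0 ≤ d) :
    (P⁻¹ * (P + d • 1)⁻¹ * (P⁻¹ + (P + d • 1)⁻¹) - (2 : ℝ) • (P + d • 1)⁻¹ ^ 3).PosSemidef := by
  set Q := P + d • 1
  have hcomm : Commute P⁻¹ Q⁻¹ := by
    have hPQ : Commute P Q := (Commute.refl P).add_right ((Commute.one_right P).smul_right d)
    simpa only [nonsing_inv_eq_ringInverse] using hPQ.ringInverse_ringInverse
  have hQinv : Q⁻¹.PosSemidef := (hP.add_smul_one hd).inv.posSemidef
  have hdiff : (P⁻¹ - Q⁻¹).PosSemidef := hP.posSemidef_inv_sub_inv_add_smul_one hd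
  rw [hcomm.mul_mul_add_sub_two_smul_pow_three]
  exact ((hdiff.mul_mul_of_isHermitian hQinv.isHermitian).smul (by norm_num)).add
    (hQinv.mul_mul_of_isHermitian hdiff.isHermitian)

end Matrix

theorem stmt12_general {k : ℕ} (T : Matrix (Fin k) (Fin k) ℝ)
    (lk lopt : ℝ) (hle : lk ≤ lopt)
    (h1 : (T + lk • 1).PosDef) :
    ((T + lk • 1)⁻¹ * (T + lopt • 1)⁻¹ * ((T + lk • 1)⁻¹ + (T + lopt • 1)⁻¹)
      - (2:ℝ) • ((T + lopt • 1)⁻¹ ^ 3)).PosSemidef := by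
  have hshift : T + lopt • 1 = T + lk • 1 + (lopt - lk) • 1 := by module
  rw [hshift]
  exact h1.posSemidef_inv_mul_inv_mul_add_sub (sub_nonneg.mpr hle)

theorem stmt12 {k : ℕ} (T : Matrix (Fin k) (Fin k) ℝ) (hT : T.PosDef)
    (lk lopt : ℝ) (h0 : 0 ≤ lk) (hle : lk ≤ lopt)
    (h1 : (T + lk • 1).PosDef) :
    ((T + lk • 1)⁻¹ * (T + lopt • 1)⁻¹ * ((T + lk • 1)⁻¹ + (T + lopt • 1)⁻¹)
      - (2:ℝ) • ((T + lopt • 1)⁻¹ ^ 3)).PosSemidef :=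
  stmt12_general T lk lopt hle h1
end

section
/- With h_k = -||g||(T_k+λ_k I)^{-1}e_1, h̃_k = -||g||(T_k+λ_opt I)^{-1}e_1, and λ_k ≤ λ_opt, both shifted matrices positive definite: ||h_k||^2 - ||h̃_k||^2 ≥ 2(λ_opt - λ_k) ||g||^2 e_1^T (T_k+λ_opt I)^{-3} e_1. Consequently λ_opt - λ_k ≤ (||h_k||^2 - ||h̃_k||^2)/(2||g||^2 e_1^T(T_k+λ_opt I)^{-3}e_1). -/
/-!
Put `A = T + λ_k I`, `B = A + δ I` with `δ = λ_opt - λ_k ≥ 0`, `v = B⁻¹ e₁`. The resolvent identity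
gives `A⁻¹ e₁ = v + δ A⁻¹ v`, hence `‖A⁻¹ e₁‖² - ‖v‖² ≥ 2δ vᵀ A⁻¹ v`, and the Loewner inequality
`B⁻¹ ≤ A⁻¹` bounds this below by `2δ vᵀ B⁻¹ v = 2δ e₁ᵀ B⁻³ e₁`. Since `B⁻³` is positive definite,
the second claim follows by dividing.
-/

open Matrix
open scoped ComplexOrder

variable {n : Type*} [Fintype n] [DecidableEq n]

theorem Matrix.inv_sub_inv_add_smul_one {R α : Type*} [CommSemiring R] [CommRing α] [Algebra R α]
    {A : Matrix n n α} {δ : R} (hA : IsUnit A) (hB : IsUnit (A + δ • 1)) :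
    A⁻¹ - (A + δ • 1)⁻¹ = δ • (A⁻¹ * (A + δ • 1)⁻¹) := by
  rw [inv_sub_inv (iff_of_true hA hB), add_sub_cancel_left, Matrix.mul_smul, mul_one,
    Matrix.smul_mul]

theorem Matrix.PosDef.inv_add_smul_one_le_inv {𝕜 : Type*} [RCLike 𝕜] {A : Matrix n n 𝕜}
    (hA : A.PosDef) {δ : ℝ} (hδ : 0 ≤ δ) : (A⁻¹ - (A + δ • 1)⁻¹).PosSemidef := by
  have hB : (A + δ • 1).PosDef := hA.add_posSemidef (PosSemidef.one.smul hδ)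
  have hBA : ((A + δ • 1) * A).PosSemidef := by
    rw [add_mul, smul_mul, one_mul, ← sq]
    exact (hA.posSemidef.pow 2).add (hA.posSemidef.smul hδ)
  rw [inv_sub_inv_add_smul_one hA.isUnit hB.isUnit, ← mul_inv_rev]
  exact hBA.inv.smul hδ

theorem Matrix.PosDef.two_mul_dotProduct_inv_pow_three_mulVec_le {A : Matrix n n ℝ}
    (hA : A.PosDef) {δ : ℝ} (hδ : 0 ≤ δ) (x : n → ℝ) :
    2 * δ * (x ⬝ᵥ ((A + δ • 1)⁻¹ ^ 3) *ᵥ x) ≤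
      (A⁻¹ *ᵥ x) ⬝ᵥ (A⁻¹ *ᵥ x) - ((A + δ • 1)⁻¹ *ᵥ x) ⬝ᵥ ((A + δ • 1)⁻¹ *ᵥ x) := by
  have hB : (A + δ • 1).PosDef := hA.add_posSemidef (PosSemidef.one.smul hδ)
  set C := (A + δ • 1)⁻¹
  set v := C *ᵥ x
  have hu : A⁻¹ *ᵥ x = v + δ • (A⁻¹ *ᵥ v) := by
    have hres := inv_sub_inv_add_smul_one hA.isUnit hB.isUnit
    conv_lhs => rw [sub_eq_iff_eq_add'.mp hres]
    rw [add_mulVec, smul_mulVec, ← mulVec_mulVec]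
  have hloewner : v ⬝ᵥ C *ᵥ v ≤ v ⬝ᵥ A⁻¹ *ᵥ v := by
    have := (hA.inv_add_smul_one_le_inv hδ).dotProduct_mulVec_nonneg v
    rwa [star_trivial, sub_mulVec, dotProduct_sub, sub_nonneg] at this
  have hcube : x ⬝ᵥ (C ^ 3) *ᵥ x = v ⬝ᵥ C *ᵥ v := by
    rw [pow_three, ← mulVec_mulVec, ← mulVec_mulVec, dotProduct_mulVec, ← mulVec_transpose,
      ← conjTranspose_eq_transpose_of_trivial, hB.inv.isHermitian.eq]
  rw [hu, hcube]
  simp only [add_dotProduct, dotProduct_add, smul_dotProduct, dotProduct_smul, smul_eq_mul,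
    dotProduct_comm (A⁻¹ *ᵥ v) v]
  have hsq : 0 ≤ (A⁻¹ *ᵥ v) ⬝ᵥ (A⁻¹ *ᵥ v) := by
    simpa using dotProduct_star_self_nonneg (A⁻¹ *ᵥ v)
  linarith [mul_le_mul_of_nonneg_left hloewner hδ, mul_nonneg (mul_self_nonneg δ) hsq]

theorem stmt13_general {k : ℕ} [NeZero k]
    (T : Matrix (Fin k) (Fin k) ℝ)
    (lk lopt : ℝ) (hle : lk ≤ lopt)
    (h1 : (T + lk • 1).PosDef) (h2 : (T + lopt • 1).PosDef)
    (gn : ℝ) (hgn : 0 < gn)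
    (hk ht : Fin k → ℝ)
    (hhk : hk = -(gn • (T + lk • 1)⁻¹.mulVec (Pi.single (0 : Fin k) 1)))
    (hht : ht = -(gn • (T + lopt • 1)⁻¹.mulVec (Pi.single (0 : Fin k) 1))) :
    2 * (lopt - lk) * gn^2 *
        ((Pi.single (0 : Fin k) (1:ℝ)) ⬝ᵥ
          ((T + lopt • 1)⁻¹ ^ 3).mulVec (Pi.single (0 : Fin k) 1))
      ≤ hk ⬝ᵥ hk - ht ⬝ᵥ ht ∧
    lopt - lk ≤ (hk ⬝ᵥ hk - ht ⬝ᵥ ht) /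
        (2 * gn^2 * ((Pi.single (0 : Fin k) (1:ℝ)) ⬝ᵥ
          ((T + lopt • 1)⁻¹ ^ 3).mulVec (Pi.single (0 : Fin k) 1))) := by
  set e : Fin k → ℝ := Pi.single 0 1
  have hshift : T + lopt • 1 = (T + lk • 1) + (lopt - lk) • 1 := by module
  have hkey := h1.two_mul_dotProduct_inv_pow_three_mulVec_le (sub_nonneg.2 hle) e
  rw [← hshift] at hkey
  have hq : 0 < e ⬝ᵥ ((T + lopt • 1)⁻¹ ^ 3) *ᵥ e := by
    have hpow : ((T + lopt • 1)⁻¹ ^ 3).PosDef :=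
      (h2.inv.posSemidef.pow 3).posDef_iff_isUnit.mpr (h2.inv.isUnit.pow 3)
    simpa only [star_trivial] using
      hpow.dotProduct_mulVec_pos (x := e) (Pi.single_ne_zero_iff.mpr one_ne_zero)
  have hnorm (y : Fin k → ℝ) : (-(gn • y)) ⬝ᵥ (-(gn • y)) = gn ^ 2 * (y ⬝ᵥ y) := by
    simp only [neg_dotProduct, dotProduct_neg, smul_dotProduct, dotProduct_smul,
      smul_eq_mul]
    ring
  have hmain : 2 * (lopt - lk) * gn ^ 2 * (e ⬝ᵥ ((T + lopt • 1)⁻¹ ^ 3) *ᵥ e)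
      ≤ hk ⬝ᵥ hk - ht ⬝ᵥ ht := by
    rw [hhk, hht, hnorm, hnorm]
    linarith [mul_le_mul_of_nonneg_left hkey (sq_nonneg gn)]
  refine ⟨hmain, ?_⟩
  rw [le_div_iff₀ (by positivity)]
  linarith

theorem stmt13 {k : ℕ} [NeZero k]
    (T : Matrix (Fin k) (Fin k) ℝ) (hT : T.IsSymm)
    (lk lopt : ℝ) (h0 : 0 ≤ lk) (hle : lk ≤ lopt)
    (h1 : (T + lk • 1).PosDef) (h2 : (T + lopt • 1).PosDef)
    (gn : ℝ) (hgn : 0 < gn)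
    (hk ht : Fin k → ℝ)
    (hhk : hk = -(gn • (T + lk • 1)⁻¹.mulVec (Pi.single (0 : Fin k) 1)))
    (hht : ht = -(gn • (T + lopt • 1)⁻¹.mulVec (Pi.single (0 : Fin k) 1))) :
    2 * (lopt - lk) * gn^2 *
        ((Pi.single (0 : Fin k) (1:ℝ)) ⬝ᵥ
          ((T + lopt • 1)⁻¹ ^ 3).mulVec (Pi.single (0 : Fin k) 1))
      ≤ hk ⬝ᵥ hk - ht ⬝ᵥ ht ∧
    lopt - lk ≤ (hk ⬝ᵥ hk - ht ⬝ᵥ ht) /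
        (2 * gn^2 * ((Pi.single (0 : Fin k) (1:ℝ)) ⬝ᵥ
          ((T + lopt • 1)⁻¹ ^ 3).mulVec (Pi.single (0 : Fin k) 1))) :=
  stmt13_general T lk lopt hle h1 h2 gn hgn hk ht hhk hht
end

section
/- Let A_opt ≻ 0 symmetric, A_opt x_opt = -g, x̃_k in a subspace with orthonormal basis Q_k, and r̃_k = A_opt x̃_k + g with Q_k^T r̃_k = 0. Then ||x_opt||^2 - ||x̃_k||^2 ≤ 2 ||A_opt^{-1} x_opt|| · ||r̃_k|| · sin∠(A_opt^{-1}x_opt, range(Q_k)), where sin∠(p, range(Q_k)) = ||(I-Q_kQ_k^T)p||/||p||. -/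
/-!
Write `p = A⁻¹ xopt` and `s = p - Q Qᵀ p`. Since `xt - xopt = A⁻¹ rt` and `A⁻¹` is symmetric,
`‖xopt‖² - ‖xt‖² = -2 p ⬝ rt - ‖A⁻¹ rt‖² ≤ -2 p ⬝ rt`. Galerkin orthogonality `Qᵀ rt = 0`
lets us replace `p` by its component `s` orthogonal to `range Q`, and Cauchy–Schwarz gives
`-2 s ⬝ rt ≤ 2 ‖s‖ ‖rt‖ = 2 ‖p‖ ‖rt‖ sin∠(p, range Q)`.
-/

open Matrix

lemma dotProduct_le_sqrt_mul_sqrt {ι : Type*} [Fintype ι] (a b : ι → ℝ) :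
    a ⬝ᵥ b ≤ √(a ⬝ᵥ a) * √(b ⬝ᵥ b) := by
  simpa only [dotProduct, ← sq] using Real.sum_mul_le_sqrt_mul_sqrt Finset.univ a b

lemma dotProduct_self_sub_dotProduct_self_le {ι : Type*} [Fintype ι] {M : Matrix ι ι ℝ}
    (hM : Mᵀ = M) {x y r : ι → ℝ} (hy : y = x + M *ᵥ r) :
    x ⬝ᵥ x - y ⬝ᵥ y ≤ -2 * (M *ᵥ x ⬝ᵥ r) := by
  have hcross : x ⬝ᵥ M *ᵥ r = M *ᵥ x ⬝ᵥ r := by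
    rw [dotProduct_mulVec, ← mulVec_transpose, hM]
  have hsq : 0 ≤ M *ᵥ r ⬝ᵥ M *ᵥ r := dotProduct_self_star_nonneg _
  rw [hy]
  simp only [dotProduct_add, add_dotProduct, dotProduct_comm (M *ᵥ r) x, hcross]
  linarith

lemma dotProduct_eq_sub_mul_transpose_mulVec_dotProduct {R ι κ : Type*} [CommRing R]
    [Fintype ι] [Fintype κ] {Q : Matrix ι κ R} {r : ι → R} (hr : Qᵀ *ᵥ r = 0) (p : ι → R) :
    p ⬝ᵥ r = (p - (Q * Qᵀ) *ᵥ p) ⬝ᵥ r := by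
  have hproj : (Q * Qᵀ) *ᵥ p ⬝ᵥ r = 0 := by
    rw [← mulVec_mulVec, dotProduct_comm, dotProduct_mulVec, ← mulVec_transpose, hr,
      zero_dotProduct]
  rw [sub_dotProduct, hproj, sub_zero]

theorem stmt14_general {n k : ℕ} (Aopt : Matrix (Fin n) (Fin n) ℝ)
    (hpd : Aopt.PosDef)
    (g xopt : Fin n → ℝ) (heq : Aopt.mulVec xopt = -g)
    (Q : Matrix (Fin n) (Fin k) ℝ)
    (xt : Fin n → ℝ)
    (rt : Fin n → ℝ) (hrt : rt = Aopt.mulVec xt + g)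
    (horth : Qᵀ.mulVec rt = 0) :
    xopt ⬝ᵥ xopt - xt ⬝ᵥ xt ≤
      2 * Real.sqrt (Aopt⁻¹.mulVec xopt ⬝ᵥ Aopt⁻¹.mulVec xopt) *
        Real.sqrt (rt ⬝ᵥ rt) *
        (Real.sqrt ((Aopt⁻¹.mulVec xopt - (Q * Qᵀ).mulVec (Aopt⁻¹.mulVec xopt)) ⬝ᵥ
            (Aopt⁻¹.mulVec xopt - (Q * Qᵀ).mulVec (Aopt⁻¹.mulVec xopt))) /
          Real.sqrt (Aopt⁻¹.mulVec xopt ⬝ᵥ Aopt⁻¹.mulVec xopt)) := by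
  have hinv : Aopt⁻¹ * Aopt = 1 := nonsing_inv_mul _ ((isUnit_iff_isUnit_det _).mp hpd.isUnit)
  have hsymm : Aopt⁻¹ᵀ = Aopt⁻¹ :=
    (conjTranspose_eq_transpose_of_trivial _).symm.trans hpd.isHermitian.inv.eq
  set p := Aopt⁻¹ *ᵥ xopt
  set s := p - (Q * Qᵀ) *ᵥ p
  have hxt : xt = xopt + Aopt⁻¹ *ᵥ rt := by
    rw [hrt, ← neg_neg g, ← heq, ← sub_eq_add_neg, ← mulVec_sub, mulVec_mulVec, hinv,
      one_mulVec, add_sub_cancel]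
  -- For `p = 0` the sine is `0 / 0 = 0`, which is harmless because then `s = 0` as well.
  have hsin : √(s ⬝ᵥ s) = √(p ⬝ᵥ p) * (√(s ⬝ᵥ s) / √(p ⬝ᵥ p)) := by
    rw [← mul_div_assoc]
    refine (mul_div_cancel_left_of_imp fun hp => ?_).symm
    rw [Real.sqrt_eq_zero (x := p ⬝ᵥ p) (dotProduct_self_star_nonneg p),
      dotProduct_self_eq_zero] at hp
    simp [s, hp]
  calc xopt ⬝ᵥ xopt - xt ⬝ᵥ xt
      ≤ -2 * (p ⬝ᵥ rt) := dotProduct_self_sub_dotProduct_self_le hsymm hxt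
    _ = 2 * (-s ⬝ᵥ rt) := by
      rw [dotProduct_eq_sub_mul_transpose_mulVec_dotProduct horth, neg_dotProduct]; ring
    _ ≤ 2 * (√(-s ⬝ᵥ -s) * √(rt ⬝ᵥ rt)) := by gcongr; exact dotProduct_le_sqrt_mul_sqrt _ _
    _ = _ := by rw [neg_dotProduct, dotProduct_neg, neg_neg]; nth_rw 1 [hsin]; ring

theorem stmt14 {n k : ℕ} (Aopt : Matrix (Fin n) (Fin n) ℝ)
    (hpd : Aopt.PosDef)
    (g xopt : Fin n → ℝ) (heq : Aopt.mulVec xopt = -g)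
    (Q : Matrix (Fin n) (Fin k) ℝ) (hQ : Qᵀ * Q = 1)
    (xt : Fin n → ℝ) (hxt : ∃ c, xt = Q.mulVec c)
    (rt : Fin n → ℝ) (hrt : rt = Aopt.mulVec xt + g)
    (horth : Qᵀ.mulVec rt = 0) :
    xopt ⬝ᵥ xopt - xt ⬝ᵥ xt ≤
      2 * Real.sqrt (Aopt⁻¹.mulVec xopt ⬝ᵥ Aopt⁻¹.mulVec xopt) *
        Real.sqrt (rt ⬝ᵥ rt) *
        (Real.sqrt ((Aopt⁻¹.mulVec xopt - (Q * Qᵀ).mulVec (Aopt⁻¹.mulVec xopt)) ⬝ᵥ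
            (Aopt⁻¹.mulVec xopt - (Q * Qᵀ).mulVec (Aopt⁻¹.mulVec xopt))) /
          Real.sqrt (Aopt⁻¹.mulVec xopt ⬝ᵥ Aopt⁻¹.mulVec xopt)) :=
  stmt14_general Aopt hpd g xopt heq Q xt rt hrt horth
end

section
/- Let g_k(x) = 2(t^k + t^{-k})^{-1} C_k((κ+1)/(κ-1) - 2x/(α_1-α_n)) where t = (√κ-1)/(√κ+1), κ = (α_1+λ)/(α_n+λ) > 1, and C_k the Chebyshev polynomial. Then 0 ≤ -g_k'(0) ≤ k√κ/(α_1+λ), where α_1+λ = ||A_opt||. -/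
/-!
At the point x₀ = (κ + 1)/(κ - 1) = (t⁻¹ + t)/2 the Chebyshev derivative is explicit:
T_k' = k U_{k-1} and U_{k-1}((s + s⁻¹)/2) (s - s⁻¹) = s^k - s^{-k}. Feeding this into the chain
rule gives -g_k'(0) = (k√κ/(α₁ + λ)) · (t^{-k} - t^k)/(t^{-k} + t^k), and the last factor lies
in [0, 1] because 0 < t < 1.
-/

open Polynomial

namespace Polynomial.Chebyshev

variable {R : Type*} [CommRing R] {s u x : R}

theorem U_eval_mul_sub_of_mul_eq_one (hsu : s * u = 1) (hx : 2 * x = s + u) (n : ℕ) :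
    (U R n).eval x * (s - u) = s ^ (n + 1) - u ^ (n + 1) := by
  induction n using Nat.twoStepInduction with
  | zero => simp
  | one =>
    simp only [Nat.cast_one, U_one, eval_mul, eval_ofNat, eval_X]
    linear_combination (s - u) * hx
  | more n ih0 ih1 =>
    push_cast at ih1 ⊢
    rw [U_add_two]
    simp only [eval_sub, eval_mul, eval_ofNat, eval_X]
    linear_combination 2 * x * ih1 - ih0 + (s ^ (n + 2) - u ^ (n + 2)) * hx
      + (s ^ (n + 1) - u ^ (n + 1)) * hsu

theorem derivative_T_eval_mul_sub_of_mul_eq_one (hsu : s * u = 1) (hx : 2 * x = s + u) (n : ℕ) :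
    (derivative (T R n)).eval x * (s - u) = n * (s ^ n - u ^ n) := by
  rcases n with _ | m
  · simp
  · rw [T_derivative_eq_U, Nat.cast_succ, add_sub_cancel_right, eval_mul, eval_intCast,
      mul_assoc, U_eval_mul_sub_of_mul_eq_one hsu hx]
    push_cast
    ring

end Polynomial.Chebyshev

theorem deriv_const_mul_eval_sub_two_mul_div (p : ℝ[X]) (c a b x : ℝ) :
    deriv (fun y => c * p.eval (a - 2 * y / b)) x =
      -(2 * c * (derivative p).eval (a - 2 * x / b) / b) := by
  have h : HasDerivAt (fun y => a - 2 * y / b) (-(2 * 1 / b)) x :=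
    (((hasDerivAt_id' x).const_mul 2).div_const b).const_sub a
  exact (((p.hasDerivAt _).comp x h).const_mul c).deriv.trans (by ring)

section
variable {s : ℝ}

theorem sub_one_div_add_one_pos (hs : 1 < s) : 0 < (s - 1) / (s + 1) :=
  div_pos (by linarith) (by linarith)

theorem sub_one_div_add_one_lt_one (hs : 1 < s) : (s - 1) / (s + 1) < 1 := by
  rw [div_lt_one (by linarith)]
  linarith

theorem inv_add_sub_one_div_add_one (hs : 1 < s) :
    ((s - 1) / (s + 1))⁻¹ + (s - 1) / (s + 1) = 2 * ((s ^ 2 + 1) / (s ^ 2 - 1)) := by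
  rw [inv_div]
  field_simp [show s - 1 ≠ 0 by linarith, show s ^ 2 - 1 ≠ 0 by nlinarith]
  ring

theorem inv_sub_sub_one_div_add_one (hs : 1 < s) :
    ((s - 1) / (s + 1))⁻¹ - (s - 1) / (s + 1) = 4 * s / (s ^ 2 - 1) := by
  rw [inv_div]
  field_simp [show s - 1 ≠ 0 by linarith, show s ^ 2 - 1 ≠ 0 by nlinarith]
  ring

end

theorem sub_div_add_mem_Icc {a b : ℝ} (hb : 0 ≤ b) (hba : b ≤ a) :
    (a - b) / (a + b) ∈ Set.Icc 0 1 :=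
  ⟨div_nonneg (by linarith) (by linarith), div_le_one_of_le₀ (by linarith) (by linarith)⟩

theorem stmt15 (k : ℕ) (α1 αn l : ℝ) (h1 : αn < α1) (h2 : 0 < αn + l)
    (κ : ℝ) (hκ : κ = (α1 + l) / (αn + l))
    (t : ℝ) (ht : t = (Real.sqrt κ - 1) / (Real.sqrt κ + 1))
    (gk : ℝ → ℝ)
    (hgk : gk = fun x => 2 * (t^k + (t^k)⁻¹)⁻¹ *
      (Polynomial.Chebyshev.T ℝ k).eval ((κ+1)/(κ-1) - 2*x/(α1 - αn))) :
    0 ≤ -(deriv gk 0) ∧ -(deriv gk 0) ≤ k * Real.sqrt κ / (α1 + l) := by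
  have hκ1 : 1 < κ := by rw [hκ, one_lt_div h2]; linarith
  obtain ⟨s, hs, rfl⟩ : ∃ s, 1 < s ∧ κ = s ^ 2 :=
    ⟨√κ, by simpa using Real.sqrt_lt_sqrt zero_le_one hκ1, (Real.sq_sqrt (by linarith)).symm⟩
  rw [Real.sqrt_sq (by linarith)] at ht ⊢
  have ht0 : 0 < t := ht ▸ sub_one_div_add_one_pos hs
  have hT' := Chebyshev.derivative_T_eval_mul_sub_of_mul_eq_one (inv_mul_cancel₀ ht0.ne')
    (ht ▸ inv_add_sub_one_div_add_one hs).symm k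
  have hsub : t⁻¹ - t = 4 * s / (s ^ 2 - 1) := ht ▸ inv_sub_sub_one_div_add_one hs
  have hA : s ^ 2 * (αn + l) = α1 + l := by rw [hκ]; field_simp
  have hE : (s ^ 2 - 1) * (αn + l) = α1 - αn := by linarith
  have hderiv : -deriv gk 0 =
      k * s / (α1 + l) * ((t⁻¹ ^ k - t ^ k) / (t⁻¹ ^ k + t ^ k)) := by
    rw [hgk, deriv_const_mul_eval_sub_two_mul_div, mul_zero, zero_div, sub_zero, ← hA, ← hE]
    rw [hsub] at hT'
    rw [← inv_pow, add_comm (t ^ k)]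
    have hab : 0 < t⁻¹ ^ k + t ^ k := by positivity
    generalize t ^ k = b, t⁻¹ ^ k = a at hT' hab ⊢
    have hs2 : s ^ 2 - 1 ≠ 0 := by nlinarith
    field_simp
    field_simp at hT'
    linear_combination hT'
  have ht1 : t < 1 := ht ▸ sub_one_div_add_one_lt_one hs
  have hr := sub_div_add_mem_Icc (pow_nonneg ht0.le k)
    (pow_le_pow_left₀ ht0.le (ht1.le.trans ((one_le_inv₀ ht0).mpr ht1.le)) k)
  have hc : 0 ≤ k * s / (α1 + l) := div_nonneg (by positivity) (by linarith)
  rw [hderiv]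
  exact ⟨mul_nonneg hc hr.1, mul_le_of_le_one_right hc hr.2⟩
end

section
/- Let M = [[-A, gg^T/Δ^2],[I, -A]] with A_opt = A+λ_opt I ≻ 0 and x_opt = -A_opt^{-1}g, ||x_opt|| = Δ. The vector (x_opt; A_opt^{-1}x_opt) is an eigenvector of M with eigenvalue λ_opt, and consequently if y = (y_1; y_2) is the unit eigenvector for the simple eigenvalue λ_opt, then ||y_1||/||y_2|| = Δ/||A_opt^{-1}x_opt||. -/
/-!
Put `B = A + λ_opt I`, so `B x_opt = -g`, and `z = B⁻¹ x_opt`. Since `B` is symmetric,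
`gᵀ z = -(B x_opt)ᵀ z = -x_optᵀ B z = -‖x_opt‖² = -Δ²`, so the rank-one block sends `z` to `-g`,
and the two block rows of `M (x_opt; z) = λ_opt (x_opt; z)` become `B x_opt = -g` and `B z = x_opt`.
When the eigenvalue is simple, `y = c (x_opt; z)` with `c ≠ 0`, and `|c|` cancels in the ratio.
-/

open Matrix

theorem smul_sumElim {α β M R : Type*} [SMul R M] (c : R) (u : α → M) (v : β → M) :
    c • Sum.elim u v = Sum.elim (c • u) (c • v) := by
  ext (i | i) <;> rfl

namespace Matrix

variable {ι : Type*} [Fintype ι]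

theorem dotProduct_eq_neg_dotProduct_self_of_isSymm {R : Type*} [CommRing R]
    {B : Matrix ι ι R} (hB : B.IsSymm) {g x z : ι → R} (hx : B *ᵥ x = -g) (hz : B *ᵥ z = x) :
    g ⬝ᵥ z = -(x ⬝ᵥ x) := by
  rw [← neg_neg g, ← hx, neg_dotProduct, ← vecMul_transpose, hB.eq, ← dotProduct_mulVec, hz]

variable [DecidableEq ι] {K : Type*} [Field K]

theorem fromBlocks_mulVec_sumElim_eq_smul {A : Matrix ι ι K} (hA : A.IsSymm) {g x z : ι → K}
    {μ : K} (hx : (A + μ • 1) *ᵥ x = -g) (hz : (A + μ • 1) *ᵥ z = x) (hxx : x ⬝ᵥ x ≠ 0) :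
    fromBlocks (-A) ((x ⬝ᵥ x)⁻¹ • vecMulVec g g) 1 (-A) *ᵥ Sum.elim x z
      = μ • Sum.elim x z := by
  have hgz := dotProduct_eq_neg_dotProduct_self_of_isSymm (hA.add (isSymm_one.smul μ)) hx hz
  rw [add_mulVec, smul_mulVec, one_mulVec] at hx hz
  rw [fromBlocks_mulVec, Sum.elim_comp_inl, Sum.elim_comp_inr, smul_mulVec, vecMulVec_mulVec,
    op_smul_eq_smul, hgz, neg_smul, smul_neg, smul_smul, inv_mul_cancel₀ hxx, one_smul,
    smul_sumElim, Sum.elim_eq_iff]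
  constructor
  · rw [neg_mulVec, ← hx]
    abel
  · rw [one_mulVec, neg_mulVec, ← hz]
    abel

end Matrix

theorem sqrt_smul_dotProduct_smul_self {ι : Type*} [Fintype ι] (c : ℝ) (v : ι → ℝ) :
    √((c • v) ⬝ᵥ (c • v)) = |c| * √(v ⬝ᵥ v) := by
  rw [smul_dotProduct, dotProduct_smul, smul_smul, smul_eq_mul, ← sq, Real.sqrt_mul (sq_nonneg c),
    Real.sqrt_sq_eq_abs]

theorem sqrt_dotProduct_div_eq_of_sumElim_eq_smul {ι : Type*} [Fintype ι] {y₁ y₂ x z : ι → ℝ}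
    {c : ℝ} (h : Sum.elim y₁ y₂ = c • Sum.elim x z) (hy : Sum.elim y₁ y₂ ≠ 0) :
    √(y₁ ⬝ᵥ y₁) / √(y₂ ⬝ᵥ y₂) = √(x ⬝ᵥ x) / √(z ⬝ᵥ z) := by
  have hc : c ≠ 0 := by
    rintro rfl
    exact hy (h.trans (zero_smul ℝ _))
  obtain ⟨rfl, rfl⟩ := Sum.elim_eq_iff.mp (h.trans (smul_sumElim c x z))
  rw [sqrt_smul_dotProduct_smul_self, sqrt_smul_dotProduct_smul_self,
    mul_div_mul_left _ _ (abs_ne_zero.mpr hc)]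

theorem stmt18_general {n : ℕ} (A : Matrix (Fin n) (Fin n) ℝ) (hA : A.IsSymm)
    (g : Fin n → ℝ) (Δ : ℝ) (hΔ : 0 < Δ) (lopt : ℝ)
    (hpd : (A + lopt • 1).PosDef)
    (xopt : Fin n → ℝ) (hx : xopt = -(A + lopt • 1)⁻¹.mulVec g)
    (hxn : Real.sqrt (xopt ⬝ᵥ xopt) = Δ)
    (M : Matrix (Fin n ⊕ Fin n) (Fin n ⊕ Fin n) ℝ)
    (hM : M = Matrix.fromBlocks (-A) ((Δ^2)⁻¹ • Matrix.vecMulVec g g) 1 (-A)) :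
    M.mulVec (Sum.elim xopt ((A + lopt • 1)⁻¹.mulVec xopt))
      = lopt • Sum.elim xopt ((A + lopt • 1)⁻¹.mulVec xopt) ∧
    ∀ y1 y2 : Fin n → ℝ,
      M.mulVec (Sum.elim y1 y2) = lopt • Sum.elim y1 y2 →
      Real.sqrt (Sum.elim y1 y2 ⬝ᵥ Sum.elim y1 y2) = 1 →
      (∀ w : Fin n ⊕ Fin n → ℝ, M.mulVec w = lopt • w →
        ∃ c : ℝ, w = c • Sum.elim xopt ((A + lopt • 1)⁻¹.mulVec xopt)) →
      Real.sqrt (y1 ⬝ᵥ y1) / Real.sqrt (y2 ⬝ᵥ y2)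
        = Δ / Real.sqrt ((A + lopt • 1)⁻¹.mulVec xopt ⬝ᵥ (A + lopt • 1)⁻¹.mulVec xopt) := by
  set B := A + lopt • 1
  have hB (v : Fin n → ℝ) : B *ᵥ (B⁻¹ *ᵥ v) = v := by
    rw [mulVec_mulVec, mul_nonsing_inv _ ((isUnit_iff_isUnit_det B).mp hpd.isUnit), one_mulVec]
  have hxx : xopt ⬝ᵥ xopt = Δ ^ 2 := by
    rw [← hxn, Real.sq_sqrt (by simpa using dotProduct_self_star_nonneg xopt)]
  have heig : M *ᵥ Sum.elim xopt (B⁻¹ *ᵥ xopt) = lopt • Sum.elim xopt (B⁻¹ *ᵥ xopt) := by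
    rw [hM, ← hxx]
    refine fromBlocks_mulVec_sumElim_eq_smul hA ?_ (hB xopt) (hxx ▸ by positivity)
    rw [hx, mulVec_neg, hB]
  refine ⟨heig, fun y₁ y₂ hy_eig hy_unit huniq => ?_⟩
  obtain ⟨c, hc⟩ := huniq _ hy_eig
  rw [sqrt_dotProduct_div_eq_of_sumElim_eq_smul hc (by rintro h; simp [h] at hy_unit), hxn]

theorem stmt18 {n : ℕ} (A : Matrix (Fin n) (Fin n) ℝ) (hA : A.IsSymm)
    (g : Fin n → ℝ) (hg : g ≠ 0) (Δ : ℝ) (hΔ : 0 < Δ) (lopt : ℝ)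
    (hpd : (A + lopt • 1).PosDef)
    (xopt : Fin n → ℝ) (hx : xopt = -(A + lopt • 1)⁻¹.mulVec g)
    (hxn : Real.sqrt (xopt ⬝ᵥ xopt) = Δ)
    (M : Matrix (Fin n ⊕ Fin n) (Fin n ⊕ Fin n) ℝ)
    (hM : M = Matrix.fromBlocks (-A) ((Δ^2)⁻¹ • Matrix.vecMulVec g g) 1 (-A)) :
    M.mulVec (Sum.elim xopt ((A + lopt • 1)⁻¹.mulVec xopt))
      = lopt • Sum.elim xopt ((A + lopt • 1)⁻¹.mulVec xopt) ∧
    ∀ y1 y2 : Fin n → ℝ,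
      M.mulVec (Sum.elim y1 y2) = lopt • Sum.elim y1 y2 →
      Real.sqrt (Sum.elim y1 y2 ⬝ᵥ Sum.elim y1 y2) = 1 →
      (∀ w : Fin n ⊕ Fin n → ℝ, M.mulVec w = lopt • w →
        ∃ c : ℝ, w = c • Sum.elim xopt ((A + lopt • 1)⁻¹.mulVec xopt)) →
      Real.sqrt (y1 ⬝ᵥ y1) / Real.sqrt (y2 ⬝ᵥ y2)
        = Δ / Real.sqrt ((A + lopt • 1)⁻¹.mulVec xopt ⬝ᵥ (A + lopt • 1)⁻¹.mulVec xopt) :=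
  stmt18_general A hA g Δ hΔ lopt hpd xopt hx hxn M hM
end
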